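/- arXiv:1905.12704 — 13 statements merged into one kernel-verified Lean document; each statement's English description precedes it below -/
import Mathlib

section
/- Every torsion-free abelian group is resistant: if G is an abelian group in which every element other than the identity has infinite order, then for every field k and every element r of the group algebra kG whose support has cardinality greater than 1, the two-sided ideal of kG generated by r is a proper ideal. -/
/-- Every torsion-free abelian group is resistant: for every field `k` and every element `r`
of the group algebra `k G` with support of cardinality `> 1`, the two-sided ideal of `k G`
generated by `r` is proper. -/
theorem torsionFree_abelian_resistant {G : Type*} [CommGroup G]
    (hG : ∀ g : G, g ≠ 1 → ¬ IsOfFinOrder g)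
    (k : Type*) [Field k] (r : MonoidAlgebra k G) (hr : 1 < r.coeff.support.card) :
    TwoSidedIdeal.span {r} ≠ ⊤ := by
  classical
  -- Step 1: G has TwoUniqueProds
  have tf : IsAddTorsionFree (Additive G) := by
    refine isAddTorsionFree_iff_not_isOfFinAddOrder.mpr ?_
    intro g hg hfin
    exact hG g.toMul (by simpa using hg) (isOfFinAddOrder_ofMul_iff.mp (by simpa using hfin))
  haveI : NoZeroSMulDivisors ℤ (Additive G) :=
    IsAddTorsionFree.to_noZeroSMulDivisors_int
  set M := Additive G
  set S := nonZeroDivisors ℤ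
  set L := LocalizedModule S M
  let f : AddHom M L := AddHom.mk (fun m => LocalizedModule.mk m 1)
    (fun x y => by rw [LocalizedModule.mk_add_mk]; simp)
  have hinj : Function.Injective f := by
    intro x y hxy
    simp only [f, AddHom.coe_mk] at hxy
    have h := LocalizedModule.mk_eq.mp hxy
    obtain ⟨u, hu⟩ := h
    simp only [one_smul] at hu
    have : (u : ℤ) • x = (u : ℤ) • y := hu
    have hne : (u : ℤ) ≠ 0 := nonZeroDivisors.coe_ne_zero u
    have := sub_eq_zero.mpr this
    rw [← smul_sub] at this
    rcases smul_eq_zero.mp this with h | h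
    · exact absurd h hne
    · exact sub_eq_zero.mp h
  haveI : CharZero (FractionRing ℤ) :=
    charZero_of_injective_algebraMap (IsFractionRing.injective ℤ (FractionRing ℤ))
  letI : Module ℚ L := Module.compHom L (Rat.castHom (FractionRing ℤ))
  haveI : TwoUniqueSums L := inferInstance
  haveI : TwoUniqueSums M :=
    TwoUniqueSums.of_injective_addHom f hinj inferInstance
  haveI : TwoUniqueProds G :=
    (MulEquiv.multiplicativeAdditive G).twoUniqueProds_iff.mp inferInstance
  -- Step 2: reduce to units
  intro htop
  have h1 : (1 : MonoidAlgebra k G) ∈ TwoSidedIdeal.span {r} := htop ▸ trivial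
  have hJ : (1 : MonoidAlgebra k G) ∈ Ideal.span {r} := by
    let J : TwoSidedIdeal (MonoidAlgebra k G) :=
      TwoSidedIdeal.mk' (Ideal.span {r} : Set (MonoidAlgebra k G))
        (Ideal.zero_mem _) (fun hx hy => Ideal.add_mem _ hx hy)
        (fun hx => Submodule.neg_mem _ hx)
        (fun hx => Ideal.mul_mem_left _ _ hx)
        (fun {x y} hx => mul_comm x y ▸ Ideal.mul_mem_left _ _ hx)
    have : (1 : MonoidAlgebra k G) ∈ J := by
      refine TwoSidedIdeal.mem_span_iff.mp h1 J ?_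
      intro x hx
      rcases hx with rfl
      exact (TwoSidedIdeal.mem_mk' _ _ _ _ _ _ _).mpr (Ideal.subset_span rfl)
    exact (TwoSidedIdeal.mem_mk' _ _ _ _ _ _ _).mp this
  obtain ⟨t, ht⟩ := Ideal.mem_span_singleton'.mp hJ
  -- Step 3: contradiction via TwoUniqueProds
  have ht0 : t ≠ 0 := by
    rintro rfl
    simp at ht
  have hcard : 1 < t.coeff.support.card * r.coeff.support.card := by
    have h1 : 1 ≤ t.coeff.support.card := Finset.card_pos.mpr (Finsupp.support_nonempty_iff.mpr (MonoidAlgebra.coeff_eq_zero.not.mpr ht0))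
    calc 1 < r.coeff.support.card := hr
    _ ≤ t.coeff.support.card * r.coeff.support.card := Nat.le_mul_of_pos_left _ (by omega)
  obtain ⟨p1, hp1, p2, hp2, hne, hu1, hu2⟩ :=
    TwoUniqueProds.uniqueMul_of_one_lt_card hcard
  rw [Finset.mem_product] at hp1 hp2
  have hv1 : (t * r).coeff (p1.1 * p1.2) ≠ 0 := by
    rw [MonoidAlgebra.coeff_mul_mul_of_uniqueMul hu1]
    exact mul_ne_zero (Finsupp.mem_support_iff.mp hp1.1) (Finsupp.mem_support_iff.mp hp1.2)
  have hv2 : (t * r).coeff (p2.1 * p2.2) ≠ 0 := by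
    rw [MonoidAlgebra.coeff_mul_mul_of_uniqueMul hu2]
    exact mul_ne_zero (Finsupp.mem_support_iff.mp hp2.1) (Finsupp.mem_support_iff.mp hp2.2)
  have hgne : p1.1 * p1.2 ≠ p2.1 * p2.2 := by
    intro h
    obtain ⟨h1, h2⟩ := hu1 hp2.1 hp2.2 h.symm
    exact hne (Prod.ext h1.symm h2.symm)
  rw [ht] at hv1 hv2
  have e1 : p1.1 * p1.2 = 1 := by
    by_contra h
    apply hv1
    rw [MonoidAlgebra.one_def, MonoidAlgebra.coeff_single, Finsupp.single_apply, if_neg (fun e => h e.symm)]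
  have e2 : p2.1 * p2.2 = 1 := by
    by_contra h
    apply hv2
    rw [MonoidAlgebra.one_def, MonoidAlgebra.coeff_single, Finsupp.single_apply, if_neg (fun e => h e.symm)]
  exact hgne (e1.trans e2.symm)
end

section
/- Let G be a group and g ∈ G with g ≠ 1. Then the image of g in the quotient group G/[g,G] has infinite order if and only if for every N ≥ 0, all h₁,…,h_N ∈ G and all ε₁,…,ε_N ∈ {1,−1} such that ∏_{i=1}^N (hᵢ⁻¹ g hᵢ)^{εᵢ} = 1 holds in G, one has Σ_{i=1}^N εᵢ = 0. -/
def commutatorSubgroup {G : Type*} [Group G] (g : G) : Subgroup G :=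
  Subgroup.closure {x : G | ∃ h : G, x = g⁻¹ * h⁻¹ * g * h}

instance commutatorSubgroup_normal {G : Type*} [Group G] (g : G) :
    (commutatorSubgroup g).Normal := by
  constructor
  have key : ∀ n ∈ commutatorSubgroup g, ∀ k : G, k * n * k⁻¹ ∈ commutatorSubgroup g := by
    intro n hn
    induction hn using Subgroup.closure_induction with
    | mem x hx =>
      intro k
      obtain ⟨h, rfl⟩ := hx
      have e : k * (g⁻¹ * h⁻¹ * g * h) * k⁻¹
          = (g⁻¹ * (k⁻¹)⁻¹ * g * k⁻¹)⁻¹ * (g⁻¹ * (h * k⁻¹)⁻¹ * g * (h * k⁻¹)) := by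
        group
      rw [e]
      exact mul_mem (inv_mem (Subgroup.subset_closure ⟨k⁻¹, rfl⟩))
        (Subgroup.subset_closure ⟨h * k⁻¹, rfl⟩)
    | one =>
      intro k; simpa using one_mem _
    | mul x y hx hy ihx ihy =>
      intro k
      have e : k * (x * y) * k⁻¹ = (k * x * k⁻¹) * (k * y * k⁻¹) := by group
      rw [e]; exact mul_mem (ihx k) (ihy k)
    | inv x hx ihx =>
      intro k
      have e : k * x⁻¹ * k⁻¹ = (k * x * k⁻¹)⁻¹ := by group
      rw [e]; exact inv_mem (ihx k)
  intro n hn k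
  exact key n hn k

section Aux
variable {G : Type*} [Group G]

lemma list_prod_zpow (x : G) (l : List ℤ) :
    (l.map fun n => x ^ n).prod = x ^ l.sum := by
  induction l with
  | nil => simp
  | cons a t ih => simp [ih, zpow_add]

lemma list_sum_neg (l : List ℤ) : (l.map Neg.neg).sum = -l.sum := by
  induction l with
  | nil => simp
  | cons a t ih => simp [ih]; omega

lemma ofFn_comp_get {α β : Type*} (l : List α) (f : α → β) :
    (List.ofFn fun i => f (l.get i)) = l.map f := by
  conv_rhs => rw [← List.ofFn_get l, List.map_ofFn]
  rfl

/-- Every element of `[g,G]` is a product of `±1`-powers of conjugates of `g`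
with exponent sum `0`. -/
lemma mem_commutatorSubgroup_rep (g : G) {x : G} (hx : x ∈ commutatorSubgroup g) :
    ∃ L : List (G × ℤ), (∀ p ∈ L, p.2 = 1 ∨ p.2 = -1) ∧
      (L.map fun p => (p.1⁻¹ * g * p.1) ^ p.2).prod = x ∧
      (L.map Prod.snd).sum = 0 := by
  induction hx using Subgroup.closure_induction with
  | mem y hy =>
    obtain ⟨h, rfl⟩ := hy
    refine ⟨[(1, -1), (h, 1)], ?_, ?_, by simp⟩
    · intro p hp; simp at hp; rcases hp with rfl | rfl <;> simp
    · simp [mul_assoc]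
  | one => exact ⟨[], by simp, by simp, by simp⟩
  | mul a b _ _ iha ihb =>
    obtain ⟨L₁, h₁, hp₁, hs₁⟩ := iha
    obtain ⟨L₂, h₂, hp₂, hs₂⟩ := ihb
    refine ⟨L₁ ++ L₂, ?_, ?_, ?_⟩
    · intro p hp; rcases List.mem_append.1 hp with hp | hp
      exacts [h₁ p hp, h₂ p hp]
    · simp [hp₁, hp₂]
    · simp [hs₁, hs₂]
  | inv a _ iha =>
    obtain ⟨L, hL, hp, hs⟩ := iha
    refine ⟨(L.map fun p => (p.1, -p.2)).reverse, ?_, ?_, ?_⟩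
    · intro p hp
      simp only [List.mem_reverse, List.mem_map] at hp
      obtain ⟨q, hq, rfl⟩ := hp
      rcases hL q hq with h | h <;> simp [h]
    · have e : (List.map (fun p : G × ℤ => (p.1⁻¹ * g * p.1) ^ p.2)
          (List.map (fun p : G × ℤ => (p.1, -p.2)) L))
          = List.map (fun x => x⁻¹) (List.map (fun p : G × ℤ => (p.1⁻¹ * g * p.1) ^ p.2) L) := by
        rw [List.map_map, List.map_map]
        congr 1
        funext p
        simp [zpow_neg]
      rw [List.map_reverse, e, ← List.prod_inv_reverse, hp]
    · rw [List.map_reverse, List.sum_reverse, List.map_map]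
      rw [show (Prod.snd ∘ fun p : G × ℤ => (p.1, -p.2)) = (Neg.neg ∘ Prod.snd) from rfl,
        ← List.map_map, list_sum_neg, hs]
      simp
end Aux

/-- For `g ≠ 1` in a group `G`, the image of `g` in `G/[g,G]` has infinite order iff
every relation `∏ᵢ (hᵢ⁻¹ g hᵢ)^εᵢ = 1` with all `εᵢ = ±1` has `∑ᵢ εᵢ = 0`. -/
theorem infiniteOrder_iff_exponentSum_zero {G : Type*} [Group G] (g : G) (hg : g ≠ 1) :
    (¬ IsOfFinOrder (QuotientGroup.mk g : G ⧸ commutatorSubgroup g)) ↔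
      (∀ (N : ℕ) (h : Fin N → G) (ε : Fin N → ℤ),
        (∀ i, ε i = 1 ∨ ε i = -1) →
        (List.ofFn fun i => ((h i)⁻¹ * g * h i) ^ (ε i)).prod = 1 →
        (∑ i, ε i) = 0) := by
  constructor
  · intro hinf N h ε hε hrel
    have hconj : ∀ k : G, (QuotientGroup.mk (k⁻¹ * g * k) : G ⧸ commutatorSubgroup g)
        = QuotientGroup.mk g := by
      intro k
      rw [QuotientGroup.eq]
      have : (k⁻¹ * g * k)⁻¹ * g = (g⁻¹ * k⁻¹ * g * k)⁻¹ := by group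
      rw [this]
      exact inv_mem (Subgroup.subset_closure ⟨k, rfl⟩)
    have keyq := congrArg (QuotientGroup.mk' (commutatorSubgroup g)) hrel
    rw [map_list_prod, map_one, List.map_ofFn] at keyq
    have heq : ((QuotientGroup.mk' (commutatorSubgroup g)) ∘
        fun i => ((h i)⁻¹ * g * h i) ^ ε i)
        = fun i => (QuotientGroup.mk g : G ⧸ commutatorSubgroup g) ^ ε i := by
      funext i
      simp only [Function.comp_apply, map_zpow]
      rw [show (QuotientGroup.mk' (commutatorSubgroup g)) ((h i)⁻¹ * g * h i)
        = QuotientGroup.mk ((h i)⁻¹ * g * h i) from rfl, hconj]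
    rw [heq] at keyq
    have hofn : (List.ofFn fun i => (QuotientGroup.mk g : G ⧸ commutatorSubgroup g) ^ ε i)
        = (List.ofFn ε).map fun n => (QuotientGroup.mk g : G ⧸ commutatorSubgroup g) ^ n := by
      rw [List.map_ofFn]; rfl
    rw [hofn, list_prod_zpow, List.sum_ofFn] at keyq
    by_contra hne
    have habs : (QuotientGroup.mk g : G ⧸ commutatorSubgroup g) ^ (((∑ i, ε i).natAbs : ℤ)) = 1 := by
      rcases Int.natAbs_eq (∑ i, ε i) with he | he
      · rw [← he]; exact keyq
      · have e2 : (((∑ i, ε i).natAbs : ℤ)) = -(∑ i, ε i) := by omega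
        rw [e2, zpow_neg, keyq, inv_one]
    rw [zpow_natCast] at habs
    exact hinf (isOfFinOrder_iff_pow_eq_one.2
      ⟨(∑ i, ε i).natAbs, Int.natAbs_pos.2 hne, habs⟩)
  · intro hrel hfin
    obtain ⟨n, hn, hgn⟩ := isOfFinOrder_iff_pow_eq_one.1 hfin
    have hmem : g ^ n ∈ commutatorSubgroup g := by
      rw [← QuotientGroup.eq_one_iff]
      rw [show (QuotientGroup.mk (g ^ n) : G ⧸ commutatorSubgroup g)
        = (QuotientGroup.mk g : G ⧸ commutatorSubgroup g) ^ n from rfl]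
      exact hgn
    obtain ⟨L, hL, hp, hs⟩ := mem_commutatorSubgroup_rep g (inv_mem hmem)
    set L' : List (G × ℤ) := List.replicate n ((1 : G), (1 : ℤ)) ++ L with hL'
    have hall : ∀ p ∈ L', p.2 = 1 ∨ p.2 = -1 := by
      intro p hp'
      rcases List.mem_append.1 hp' with hp' | hp'
      · left; rw [List.eq_of_mem_replicate hp']
      · exact hL p hp'
    have hprod : (L'.map fun p => (p.1⁻¹ * g * p.1) ^ p.2).prod = 1 := by
      rw [hL', List.map_append, List.prod_append, hp]
      simp [List.map_replicate]
    have hsum : (L'.map Prod.snd).sum = n := by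
      rw [hL', List.map_append, List.sum_append, hs]
      simp [List.map_replicate]
    have key := hrel L'.length (fun i => (L'.get i).1) (fun i => (L'.get i).2)
      (fun i => hall _ (L'.get_mem i))
      (by
        have e : (List.ofFn fun i => ((L'.get i).1⁻¹ * g * (L'.get i).1) ^ (L'.get i).2)
            = L'.map (fun p => (p.1⁻¹ * g * p.1) ^ p.2) := ofFn_comp_get L' (fun p : G × ℤ => (p.1⁻¹ * g * p.1) ^ p.2)
        rw [e, hprod])
    have e2 : (List.ofFn fun i => (L'.get i).2) = L'.map Prod.snd := ofFn_comp_get L' Prod.snd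
    have e3 : (∑ i, (L'.get i).2) = (List.ofFn fun i => (L'.get i).2).sum :=
      List.sum_ofFn.symm
    rw [e3, e2, hsum] at key
    omega
end

section
/- Let G be a group and g ∈ G with g ≠ 1. If the image of g in the quotient group G/[g,G] has infinite order, then for every field k and every nonzero c ∈ k, the two-sided ideal of the group algebra kG generated by the element g − c is a proper ideal of kG. -/
/-- If `g ≠ 1` and the image of `g` in `G/[g,G]` has infinite order, then for every field `k`
and every nonzero `c ∈ k`, the two-sided ideal of `k G` generated by `g - c` is proper. -/
theorem span_g_sub_c_ne_top_of_infiniteOrder {G : Type*} [Group G] (g : G) (hg : g ≠ 1)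
    (hinf : ¬ IsOfFinOrder (QuotientGroup.mk g : G ⧸ commutatorSubgroup g))
    (k : Type*) [Field k] (c : k) (hc : c ≠ 0) :
    TwoSidedIdeal.span
      {MonoidAlgebra.of k G g - algebraMap k (MonoidAlgebra k G) c} ≠ ⊤ := by
  classical
  set Q := G ⧸ commutatorSubgroup g with hQ
  set z : Q := QuotientGroup.mk g with hz
  -- z is central in Q
  have hz_central : ∀ q : Q, z * q = q * z := by
    intro q
    induction q using QuotientGroup.induction_on with
    | H h =>
      show ((g : Q) * (h : Q)) = (h : Q) * (g : Q)
      rw [← QuotientGroup.mk_mul, ← QuotientGroup.mk_mul]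
      rw [QuotientGroup.eq]
      have : (g⁻¹ * h⁻¹ * g * h) ∈ commutatorSubgroup g :=
        Subgroup.subset_closure ⟨h, rfl⟩
      have h2 := inv_mem this
      have e : (g * h)⁻¹ * (h * g) = (g⁻¹ * h⁻¹ * g * h)⁻¹ := by group
      rw [e]
      exact h2
  have hinj : Function.Injective fun n : ℤ => z ^ n :=
    injective_zpow_iff_not_isOfFinOrder.mpr hinf
  set u : kˣ := Units.mk0 c hc with hu
  set w : Q → k := fun q =>
    if h : ∃ n : ℤ, z ^ n = q then ((u ^ h.choose : kˣ) : k) else 0 with hw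
  have hw_mul : ∀ q : Q, w (z * q) = c * w q := by
    intro q
    by_cases h : ∃ n : ℤ, z ^ n = q
    · have h' : ∃ n : ℤ, z ^ n = z * q :=
        ⟨1 + h.choose, by rw [zpow_add, zpow_one, h.choose_spec]⟩
      rw [hw]
      simp only [dif_pos h, dif_pos h']
      have e1 : h'.choose = 1 + h.choose := by
        apply hinj
        show z ^ h'.choose = z ^ (1 + h.choose)
        rw [h'.choose_spec, zpow_add, zpow_one, h.choose_spec]
      rw [e1, zpow_add, zpow_one]
      push_cast
      rfl
    · have h' : ¬ ∃ n : ℤ, z ^ n = z * q := by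
        rintro ⟨m, hm⟩
        exact h ⟨m - 1, by
          rw [zpow_sub, zpow_one, hm, hz_central q, mul_inv_cancel_right]⟩
      rw [hw]
      simp only [dif_neg h, dif_neg h', mul_zero]
  have hw_one : w 1 = 1 := by
    have h : ∃ n : ℤ, z ^ n = 1 := ⟨0, zpow_zero z⟩
    rw [hw]
    simp only [dif_pos h]
    have e0 : h.choose = 0 := by
      apply hinj
      show z ^ h.choose = z ^ (0 : ℤ)
      rw [h.choose_spec, zpow_zero]
    rw [e0, zpow_zero, Units.val_one]
  -- the linear functional
  set ψ : MonoidAlgebra k Q →ₗ[k] k :=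
    (Finsupp.linearCombination k w).comp (MonoidAlgebra.coeffLinearEquiv k).toLinearMap with hψ
  have hψ_single : ∀ (q : Q) (a : k), ψ (MonoidAlgebra.single q a) = a * w q := by
    intro q a
    rw [hψ]
    show Finsupp.linearCombination k w (Finsupp.single q a) = a * w q
    rw [Finsupp.linearCombination_single, smul_eq_mul]
  set t : MonoidAlgebra k Q :=
    MonoidAlgebra.single z 1 - algebraMap k (MonoidAlgebra k Q) c with ht
  have halg : (algebraMap k (MonoidAlgebra k Q) c) = MonoidAlgebra.single (1 : Q) c := by
    rw [MonoidAlgebra.coe_algebraMap]; rfl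
  -- key computation: ψ kills t * x
  have keyA : ∀ x : MonoidAlgebra k Q, ψ (t * x) = 0 := by
    intro x
    induction x using MonoidAlgebra.induction_linear with
    | zero => simp
    | add f h hf hh => rw [mul_add, map_add, hf, hh, add_zero]
    | single q a =>
      rw [ht, halg, sub_mul, MonoidAlgebra.single_mul_single,
        MonoidAlgebra.single_mul_single, map_sub, hψ_single, hψ_single]
      simp only [one_mul]
      rw [hw_mul q]
      ring
  -- t is central
  have hcent : ∀ x : MonoidAlgebra k Q, t * x = x * t := by
    intro x
    induction x using MonoidAlgebra.induction_linear with
    | zero => simp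
    | add f h hf hh => rw [mul_add, add_mul, hf, hh]
    | single q a =>
      rw [ht, halg, sub_mul, mul_sub, MonoidAlgebra.single_mul_single,
        MonoidAlgebra.single_mul_single, MonoidAlgebra.single_mul_single,
        MonoidAlgebra.single_mul_single, hz_central q, one_mul, mul_one,
        one_mul, mul_one, mul_comm c a]
  set π : MonoidAlgebra k G →+* MonoidAlgebra k Q :=
    MonoidAlgebra.mapDomainRingHom k (QuotientGroup.mk' (commutatorSubgroup g)) with hπ
  -- the concrete two-sided ideal
  set I : TwoSidedIdeal (MonoidAlgebra k G) :=
    TwoSidedIdeal.mk' {x | ∀ a b : MonoidAlgebra k Q, ψ (a * π x * b) = 0}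
      (by intro a b; rw [map_zero, mul_zero, zero_mul, map_zero])
      (by intro x y hx hy a b
          rw [map_add, mul_add, add_mul, map_add, hx a b, hy a b, add_zero])
      (by intro x hx a b
          rw [map_neg, mul_neg, neg_mul, map_neg, hx a b, neg_zero])
      (by intro x y hy a b
          rw [map_mul π x y, ← mul_assoc a (π x) (π y)]
          exact hy (a * π x) b)
      (by intro x y hx a b
          rw [map_mul π x y, ← mul_assoc a (π x) (π y),
            mul_assoc (a * π x) (π y) b]
          exact hx a (π y * b)) with hI
  have hs : (MonoidAlgebra.of k G g - algebraMap k (MonoidAlgebra k G) c) ∈ I := by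
    rw [hI, TwoSidedIdeal.mem_mk']
    intro a b
    have hπs : π (MonoidAlgebra.of k G g - algebraMap k (MonoidAlgebra k G) c) = t := by
      rw [map_sub, ht]
      congr 1
      · show MonoidAlgebra.mapDomain _ (MonoidAlgebra.single g 1) = _
        rw [MonoidAlgebra.mapDomain_single]
        rfl
      · exact MonoidAlgebra.mapDomain_algebraMap k
          (QuotientGroup.mk' (commutatorSubgroup g)) c
    rw [hπs, ← hcent a, mul_assoc]
    exact keyA (a * b)
  intro htop
  have h1 : (1 : MonoidAlgebra k G) ∈ TwoSidedIdeal.span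
      {MonoidAlgebra.of k G g - algebraMap k (MonoidAlgebra k G) c} := by
    rw [htop]; trivial
  have h2 : (1 : MonoidAlgebra k G) ∈ I :=
    TwoSidedIdeal.mem_span_iff.mp h1 I (Set.singleton_subset_iff.mpr hs)
  rw [hI, TwoSidedIdeal.mem_mk'] at h2
  have h3 := h2 1 1
  rw [map_one, mul_one, one_mul] at h3
  have : ψ (1 : MonoidAlgebra k Q) = 1 := by
    rw [MonoidAlgebra.one_def, hψ_single, hw_one, mul_one]
  rw [this] at h3
  exact one_ne_zero h3
end

section
/- Let G be a group, g ∈ G with g ≠ 1, k a field, and c a nonzero element of k of infinite multiplicative order (that is, c^n ≠ 1 for all integers n ≥ 1). If the two-sided ideal of the group algebra kG generated by g − c is a proper ideal of kG, then the image of g in the quotient group G/[g,G] has infinite order. -/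
/-- If `g ≠ 1`, `c` is a nonzero element of a field `k` of infinite multiplicative order,
and the two-sided ideal of `k G` generated by `g - c` is proper, then the image of `g`
in `G/[g,G]` has infinite order. -/
theorem infiniteOrder_of_span_g_sub_c_ne_top {G : Type*} [Group G] (g : G) (hg : g ≠ 1)
    (k : Type*) [Field k] (c : k) (hc0 : c ≠ 0)
    (hc : ∀ n : ℕ, 1 ≤ n → c ^ n ≠ 1)
    (hspan : TwoSidedIdeal.span
      {MonoidAlgebra.of k G g - algebraMap k (MonoidAlgebra k G) c} ≠ ⊤) :
    ¬ IsOfFinOrder (QuotientGroup.mk g : G ⧸ commutatorSubgroup g) := by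

  intro hfin
  set R := MonoidAlgebra k G
  set I : TwoSidedIdeal R := TwoSidedIdeal.span
    {MonoidAlgebra.of k G g - algebraMap k (MonoidAlgebra k G) c}
  set φ : G → R := fun h => MonoidAlgebra.of k G h with hφ
  set ψ : k → R := fun a => algebraMap k R a with hψ
  have h1 : φ g - ψ c ∈ I := TwoSidedIdeal.subset_span rfl
  -- conjugates of g are congruent to c
  have hconj : ∀ h : G, φ (h⁻¹ * g * h) - ψ c ∈ I := by
    intro h
    have := I.mul_mem_right _ (φ h) (I.mul_mem_left (φ h⁻¹) _ h1)
    convert this using 1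
    rw [mul_sub, sub_mul, ← map_mul, ← map_mul]
    congr 1
    rw [← Algebra.commutes c (φ h⁻¹), mul_assoc, ← map_mul,
      inv_mul_cancel, map_one, mul_one]
  -- g⁻¹ is congruent to c⁻¹, so commutators are congruent to 1
  have hcomm : ∀ h : G, φ (g⁻¹ * h⁻¹ * g * h) - 1 ∈ I := by
    intro h
    have e1 : φ g⁻¹ * (φ (h⁻¹ * g * h) - ψ c) ∈ I := I.mul_mem_left _ _ (hconj h)
    have e2 : φ g⁻¹ * (φ g - ψ c) ∈ I := I.mul_mem_left _ _ h1
    have := I.sub_mem e1 e2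
    convert this using 1
    rw [mul_sub, mul_sub, ← map_mul, ← map_mul, inv_mul_cancel, map_one]
    have : g⁻¹ * (h⁻¹ * g * h) = g⁻¹ * h⁻¹ * g * h := by group
    rw [this]; abel
  -- every element of [g,G] is congruent to 1
  have hsub : ∀ x ∈ commutatorSubgroup g, φ x - 1 ∈ I := by
    intro x hx
    induction hx using Subgroup.closure_induction with
    | mem x hx => obtain ⟨h, rfl⟩ := hx; exact hcomm h
    | one =>
      have e : φ (1 : G) - 1 = 0 := by simp only [hφ]; rw [map_one, sub_self]
      rw [e]; exact I.zero_mem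
    | mul x y hx hy ihx ihy =>
      have := I.add_mem (I.mul_mem_left (φ x) _ ihy) ihx
      convert this using 1
      simp only [hφ]; rw [map_mul, mul_sub, mul_one]; abel
    | inv x hx ihx =>
      have := I.neg_mem (I.mul_mem_left (φ x⁻¹) _ ihx)
      convert this using 1
      simp only [hφ]
      rw [mul_sub, ← map_mul, inv_mul_cancel, map_one, mul_one]; abel
  -- powers of g are congruent to powers of c
  have hpow : ∀ n : ℕ, φ (g ^ n) - ψ (c ^ n) ∈ I := by
    intro n
    induction n with
    | zero =>
      have e : φ (g ^ 0) - ψ (c ^ 0) = 0 := by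
        simp only [hφ, hψ]; rw [pow_zero, pow_zero, map_one, map_one, sub_self]
      rw [e]; exact I.zero_mem
    | succ n ih =>
      have := I.add_mem (I.mul_mem_left (φ (g ^ n)) _ h1)
        (I.mul_mem_right _ (ψ c) ih)
      convert this using 1
      simp only [hφ, hψ]
      rw [pow_succ, pow_succ, map_mul, map_mul, sub_mul, mul_sub]
      noncomm_ring
  -- finite order gives g ^ n ∈ [g,G] for some n ≥ 1
  obtain ⟨n, hn1, hgn⟩ := hfin.exists_pow_eq_one
  have hmem : g ^ n ∈ commutatorSubgroup g := by
    rwa [← QuotientGroup.eq_one_iff, QuotientGroup.mk_pow]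
  have key : ψ (c ^ n) - 1 ∈ I := by
    have := I.sub_mem (hsub _ hmem) (hpow n)
    convert this using 1
    abel
  have hcn : c ^ n ≠ 1 := hc n hn1
  have hone : (1 : R) ∈ I := by
    have := I.mul_mem_left (ψ (c ^ n - 1)⁻¹) _ key
    have e : ψ (c ^ n - 1)⁻¹ * (ψ (c ^ n) - 1) = 1 := by
      rw [hψ]
      rw [show (algebraMap k R) (c ^ n) - 1 = algebraMap k R (c ^ n - 1) by
        rw [map_sub, map_one]]
      rw [← map_mul, inv_mul_cancel₀ (sub_ne_zero.mpr hcn), map_one]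
    rwa [e] at this
  exact hspan (TwoSidedIdeal.eq_top I hone)
end

section
/- Let G be a group and g ∈ G with g ≠ 1, and suppose the image of g in the quotient group G/[g,G] has finite order n ≥ 1. Then for every field k and every nonzero c ∈ k, the two-sided ideal of the group algebra kG generated by g − c equals all of kG if and only if c^n ≠ 1. -/
section Aux

variable {G : Type*} [Group G]

/-- The image of `g` is central in `G ⧸ commutatorSubgroup g`. -/
lemma mk_g_central (g : G) (q : G ⧸ commutatorSubgroup g) :
    (QuotientGroup.mk g : G ⧸ commutatorSubgroup g) * q = q * QuotientGroup.mk g := by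
  induction q using QuotientGroup.induction_on with
  | H h =>
    show (QuotientGroup.mk (g * h) : G ⧸ commutatorSubgroup g) = QuotientGroup.mk (h * g)
    rw [QuotientGroup.eq]
    have : (g * h)⁻¹ * (h * g) = (g⁻¹ * h⁻¹ * g * h)⁻¹ := by group
    rw [this]
    exact inv_mem (Subgroup.subset_closure ⟨h, rfl⟩)

end Aux

lemma pow_eq_of_modEq_aux {k : Type*} [Monoid k] {c : k} {n : ℕ} (hcn : c ^ n = 1)
    {a b : ℕ} (h : a ≡ b [MOD n]) : c ^ a = c ^ b := by
  have key : ∀ m : ℕ, c ^ m = c ^ (m % n) := by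
    intro m
    conv_lhs => rw [← Nat.div_add_mod m n]
    rw [pow_add, pow_mul, hcn, one_pow, one_mul]
  rw [key a, key b]
  exact congrArg (c ^ ·) h

/-- If `g ≠ 1` and the image of `g` in `G/[g,G]` has finite order `n ≥ 1`, then for every
field `k` and nonzero `c ∈ k`, the two-sided ideal of `k G` generated by `g - c` is improper
(equals all of `k G`) iff `c^n ≠ 1`. -/
theorem span_g_sub_c_eq_top_iff {G : Type*} [Group G] (g : G) (hg : g ≠ 1)
    (n : ℕ) (hn : 1 ≤ n)
    (hord : orderOf (QuotientGroup.mk g : G ⧸ commutatorSubgroup g) = n)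
    (k : Type*) [Field k] (c : k) (hc : c ≠ 0) :
    TwoSidedIdeal.span
      {MonoidAlgebra.of k G g - algebraMap k (MonoidAlgebra k G) c} = ⊤ ↔ c ^ n ≠ 1 := by
  set gq : G ⧸ commutatorSubgroup g := QuotientGroup.mk g with hgq
  constructor
  · -- `span = ⊤ → c ^ n ≠ 1`
    intro htop hcn
    -- exponent lemma
    have hpow : ∀ a b : ℕ, gq ^ a = gq ^ b → c ^ a = c ^ b := by
      intro a b h
      have h2 : a ≡ b [MOD n] := by rw [← hord]; exact pow_eq_pow_iff_modEq.mp h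
      exact pow_eq_of_modEq_aux hcn h2
    have hgqn : gq ^ n = 1 := by rw [← hord]; exact pow_orderOf_eq_one _
    classical
    set χ : (G ⧸ commutatorSubgroup g) → k :=
      fun q => if hq : ∃ m : ℕ, q = gq ^ m then c ^ hq.choose else 0 with hχ
    have hχ_pow : ∀ (m : ℕ), χ (gq ^ m) = c ^ m := by
      intro m
      have hq : ∃ m' : ℕ, gq ^ m = gq ^ m' := ⟨m, rfl⟩
      rw [hχ]; dsimp only
      rw [dif_pos hq]
      exact hpow _ _ hq.choose_spec.symm
    have hχ_one : χ 1 = 1 := by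
      have := hχ_pow 0
      simpa using this
    have hχ_mul : ∀ q, χ (gq * q) = c * χ q := by
      intro q
      by_cases hq : ∃ m : ℕ, q = gq ^ m
      · obtain ⟨m, rfl⟩ := hq
        rw [← pow_succ', hχ_pow, hχ_pow, pow_succ']
      · have hq' : ¬ ∃ m : ℕ, gq * q = gq ^ m := by
          rintro ⟨m, hm⟩
          apply hq
          cases m with
          | zero =>
            refine ⟨n - 1, ?_⟩
            simp only [pow_zero] at hm
            have hq1 : q = gq⁻¹ := by
              rw [← one_mul q, ← inv_mul_cancel gq, mul_assoc, hm, mul_one]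
            have h2 : gq ^ (n - 1) = gq⁻¹ := by
              apply eq_inv_of_mul_eq_one_left
              rw [← pow_succ, show n - 1 + 1 = n by omega, hgqn]
            rw [hq1, h2]
          | succ m' =>
            refine ⟨m', ?_⟩
            have : q = gq⁻¹ * gq ^ (m' + 1) := by rw [← hm]; group
            rw [this, pow_succ']
            group
        rw [hχ]; dsimp only
        rw [dif_neg hq, dif_neg hq', mul_zero]
    -- the linear functional
    set f : G → k := fun h => χ (QuotientGroup.mk h) with hf
    set F : MonoidAlgebra k G →ₗ[k] k := Finsupp.linearCombination k f ∘ₗ (MonoidAlgebra.coeffLinearEquiv k).toLinearMap with hF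
    have hF_single : ∀ (a : G) (b : k), F (MonoidAlgebra.single a b) = b * f a := by
      intro a b
      rw [hF]
      show (Finsupp.linearCombination k f) (Finsupp.single a b) = b * f a
      rw [Finsupp.linearCombination_single, smul_eq_mul]
    have key : ∀ x y : MonoidAlgebra k G,
        F (x * MonoidAlgebra.of k G g * y) = c * F (x * y) := by
      intro x y
      induction x using MonoidAlgebra.induction_linear with
      | zero => simp only [zero_mul, map_zero, mul_zero]
      | add u v hu hv => simp only [add_mul, map_add, hu, hv, mul_add]
      | single a b =>
        induction y using MonoidAlgebra.induction_linear with
        | zero => simp only [mul_zero, map_zero]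
        | add u v hu hv => simp only [mul_add, map_add, hu, hv]
        | single a' b' =>
          have e1 : (MonoidAlgebra.single a b : MonoidAlgebra k G) * MonoidAlgebra.of k G g
              * MonoidAlgebra.single a' b' = MonoidAlgebra.single (a * g * a') (b * b') := by
            rw [MonoidAlgebra.of_apply, MonoidAlgebra.single_mul_single,
              MonoidAlgebra.single_mul_single, mul_one]
          have e2 : (MonoidAlgebra.single a b : MonoidAlgebra k G)
              * MonoidAlgebra.single a' b' = MonoidAlgebra.single (a * a') (b * b') := by
            rw [MonoidAlgebra.single_mul_single]
          rw [e1, e2, hF_single, hF_single]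
          have : f (a * g * a') = c * f (a * a') := by
            rw [hf]; dsimp only
            have : (QuotientGroup.mk (a * g * a') : G ⧸ commutatorSubgroup g)
                = gq * QuotientGroup.mk (a * a') := by
              have h1 : (QuotientGroup.mk (a * g * a') : G ⧸ commutatorSubgroup g)
                  = QuotientGroup.mk a * gq * QuotientGroup.mk a' := rfl
              have h2 : (QuotientGroup.mk (a * a') : G ⧸ commutatorSubgroup g)
                  = QuotientGroup.mk a * QuotientGroup.mk a' := rfl
              rw [h1, h2, ← mul_assoc, ← mk_g_central g (QuotientGroup.mk a), mul_assoc]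
            rw [this, hχ_mul]
          rw [this]; ring
    -- the two-sided ideal J
    set J : TwoSidedIdeal (MonoidAlgebra k G) := TwoSidedIdeal.mk'
      {x | ∀ a b : MonoidAlgebra k G, F (a * x * b) = 0}
      (by intro a b; simp)
      (by intro x y hx hy a b
          rw [mul_add, add_mul, map_add, hx, hy, add_zero])
      (by intro x hx a b
          rw [mul_neg, neg_mul, map_neg, hx, neg_zero])
      (by intro x y hy a b
          rw [← mul_assoc]
          exact hy (a * x) b)
      (by intro x y hx a b
          rw [← mul_assoc, mul_assoc (a * x)]
          exact hx a (y * b)) with hJ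
    have hgcJ : MonoidAlgebra.of k G g - algebraMap k (MonoidAlgebra k G) c ∈ J := by
      rw [hJ, TwoSidedIdeal.mem_mk']
      intro a b
      have e : a * (MonoidAlgebra.of k G g - algebraMap k (MonoidAlgebra k G) c) * b
          = a * MonoidAlgebra.of k G g * b - c • (a * b) := by
        simp [Algebra.algebraMap_eq_smul_one, mul_sub, sub_mul, mul_smul_comm, smul_mul_assoc]
      rw [e, map_sub, map_smul, key, smul_eq_mul, sub_self]
    have h1J : (1 : MonoidAlgebra k G) ∈ J := by
      have h1top : (1 : MonoidAlgebra k G) ∈ TwoSidedIdeal.span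
          {MonoidAlgebra.of k G g - algebraMap k (MonoidAlgebra k G) c} := by
        rw [htop]; trivial
      exact TwoSidedIdeal.mem_span_iff.mp h1top J (Set.singleton_subset_iff.mpr hgcJ)
    rw [hJ, TwoSidedIdeal.mem_mk'] at h1J
    have := h1J 1 1
    rw [one_mul, mul_one] at this
    have hF1 : F (1 : MonoidAlgebra k G) = 1 := by
      rw [MonoidAlgebra.one_def, hF_single, one_mul, hf]
      simpa using hχ_one
    rw [hF1] at this
    exact one_ne_zero this
  · -- `c ^ n ≠ 1 → span = ⊤`
    intro hcn
    set I := TwoSidedIdeal.span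
      {MonoidAlgebra.of k G g - algebraMap k (MonoidAlgebra k G) c} with hI
    set r := I.ringCon with hr
    have hmem : ∀ x : MonoidAlgebra k G, x ∈ I ↔ r x 0 := fun x => Iff.rfl
    have hrel : ∀ x y : MonoidAlgebra k G, r x y ↔ x - y ∈ I := fun x y =>
      TwoSidedIdeal.rel_iff I x y
    have h1 : r (MonoidAlgebra.of k G g) (algebraMap k (MonoidAlgebra k G) c) := by
      rw [hrel]
      exact TwoSidedIdeal.subset_span rfl
    have hcentral : ∀ x : MonoidAlgebra k G,
        r (MonoidAlgebra.of k G g * x) (x * MonoidAlgebra.of k G g) := by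
      intro x
      have ha : r (MonoidAlgebra.of k G g * x) (algebraMap k (MonoidAlgebra k G) c * x) :=
        r.mul h1 (r.refl x)
      have hb : algebraMap k (MonoidAlgebra k G) c * x = x * algebraMap k (MonoidAlgebra k G) c :=
        (Algebra.commutes c x).symm ▸ (Algebra.commutes c x)
      have hcc : r (x * algebraMap k (MonoidAlgebra k G) c) (x * MonoidAlgebra.of k G g) :=
        r.mul (r.refl x) (r.symm h1)
      exact r.trans (hb ▸ ha) hcc
    have hcomm : ∀ h : G, r (MonoidAlgebra.of k G (g⁻¹ * h⁻¹ * g * h)) 1 := by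
      intro h
      have e : MonoidAlgebra.of k G (g⁻¹ * h⁻¹ * g * h)
          = MonoidAlgebra.of k G g⁻¹ * (MonoidAlgebra.of k G h⁻¹ * MonoidAlgebra.of k G g)
            * MonoidAlgebra.of k G h := by
        simp [map_mul, mul_assoc]
      have swap : r (MonoidAlgebra.of k G h⁻¹ * MonoidAlgebra.of k G g)
          (MonoidAlgebra.of k G g * MonoidAlgebra.of k G h⁻¹) :=
        r.symm (hcentral (MonoidAlgebra.of k G h⁻¹))
      have step : r (MonoidAlgebra.of k G g⁻¹ * (MonoidAlgebra.of k G h⁻¹ * MonoidAlgebra.of k G g)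
            * MonoidAlgebra.of k G h)
          (MonoidAlgebra.of k G g⁻¹ * (MonoidAlgebra.of k G g * MonoidAlgebra.of k G h⁻¹)
            * MonoidAlgebra.of k G h) :=
        r.mul (r.mul (r.refl _) swap) (r.refl _)
      have e2 : MonoidAlgebra.of k G g⁻¹ * (MonoidAlgebra.of k G g * MonoidAlgebra.of k G h⁻¹)
            * MonoidAlgebra.of k G h = 1 := by
        rw [← mul_assoc, ← map_mul, ← map_mul, ← map_mul]
        simp [MonoidAlgebra.one_def]
      rw [e, ← e2]
      exact step
    have hN : ∀ x ∈ commutatorSubgroup g, r (MonoidAlgebra.of k G x) 1 := by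
      intro x hx
      induction hx using Subgroup.closure_induction with
      | mem y hy => obtain ⟨h, rfl⟩ := hy; exact hcomm h
      | one => rw [map_one]; exact r.refl _
      | mul y z hy hz ihy ihz =>
        have := r.mul ihy ihz
        rw [one_mul, ← map_mul] at this
        exact this
      | inv y hy ihy =>
        have h2 := r.mul (r.refl (MonoidAlgebra.of k G y⁻¹)) ihy
        rw [mul_one, ← map_mul, inv_mul_cancel] at h2
        have : MonoidAlgebra.of k G (1 : G) = 1 := map_one _
        exact r.symm (this ▸ h2)
    have hgn : g ^ n ∈ commutatorSubgroup g := by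
      rw [← QuotientGroup.eq_one_iff, QuotientGroup.mk_pow, ← hgq, ← hord]
      exact pow_orderOf_eq_one _
    have hpowrel : ∀ m : ℕ, r (MonoidAlgebra.of k G g ^ m)
        (algebraMap k (MonoidAlgebra k G) c ^ m) := by
      intro m
      induction m with
      | zero => simpa using r.refl (1 : MonoidAlgebra k G)
      | succ m ih =>
        rw [pow_succ, pow_succ]
        exact r.mul ih h1
    have hfinal : r (algebraMap k (MonoidAlgebra k G) (c ^ n)) 1 := by
      have ha := hN _ hgn
      have hb : MonoidAlgebra.of k G (g ^ n) = MonoidAlgebra.of k G g ^ n := map_pow _ g n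
      rw [hb] at ha
      have hcpow := hpowrel n
      have : r (algebraMap k (MonoidAlgebra k G) c ^ n) 1 := r.trans (r.symm hcpow) ha
      rw [← map_pow] at this
      exact this
    have hsub : algebraMap k (MonoidAlgebra k G) (c ^ n) - 1 ∈ I := (hrel _ _).mp hfinal
    have hunit : algebraMap k (MonoidAlgebra k G) (c ^ n) - 1
        = algebraMap k (MonoidAlgebra k G) (c ^ n - 1) := by
      rw [map_sub, map_one]
    rw [hunit] at hsub
    have h1mem : (1 : MonoidAlgebra k G) ∈ I := by
      have := I.mul_mem_left (algebraMap k (MonoidAlgebra k G) (c ^ n - 1)⁻¹) _ hsub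
      rwa [← map_mul, inv_mul_cancel₀ (sub_ne_zero.mpr hcn), map_one] at this
    exact I.eq_top h1mem
end

section
/- Let G be a group and g ∈ G with g ≠ 1, and suppose the image of g in the quotient group G/[g,G] has finite order n ≥ 1. Then the set of integers of the form M − M', taken over all M, M' ≥ 0 and all h₁,…,h_M, h'₁,…,h'_{M'} ∈ G satisfying ∏_{i=1}^M hᵢ⁻¹ g hᵢ = ∏_{j=1}^{M'} h'ⱼ⁻¹ g h'ⱼ in G, is exactly the set of all integer multiples of n. -/
private lemma conj_map_prod {G : Type*} [Group G] (g c : G) (L : List G) :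
    c⁻¹ * (L.map fun h => h⁻¹ * g * h).prod * c
      = ((L.map (· * c)).map fun h => h⁻¹ * g * h).prod := by
  induction L with
  | nil => simp
  | cons a L ih =>
    simp only [List.map_cons, List.prod_cons]
    rw [← ih]; group

private lemma decomp_aux {G : Type*} [Group G] (g : G) :
    ∀ x ∈ commutatorSubgroup g, ∃ A B : List G, A.length = B.length ∧
      x = (A.map fun h => h⁻¹ * g * h).prod * ((B.map fun h => h⁻¹ * g * h).prod)⁻¹ := by
  intro x hx
  induction hx using Subgroup.closure_induction with
  | mem x hx =>
    obtain ⟨h, rfl⟩ := hx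
    refine ⟨[h * g], [1], rfl, ?_⟩
    simp only [List.map_cons, List.map_nil, List.prod_cons, List.prod_nil]
    group
  | one => exact ⟨[], [], rfl, by simp⟩
  | mul x y hx hy ihx ihy =>
    obtain ⟨A, B, hlen, rfl⟩ := ihx
    obtain ⟨A', B', hlen', rfl⟩ := ihy
    refine ⟨A ++ A'.map (· * (B.map fun h => h⁻¹ * g * h).prod), B' ++ B, ?_, ?_⟩
    · simp [hlen, hlen', Nat.add_comm]
    · have hc := conj_map_prod g ((B.map fun h => h⁻¹ * g * h).prod) A'
      simp only [List.map_append, List.prod_append]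
      rw [← hc]
      group
  | inv x hx ihx =>
    obtain ⟨A, B, hlen, rfl⟩ := ihx
    exact ⟨B, A, hlen.symm, by group⟩

private lemma mk_conj_prod {G : Type*} [Group G] (g : G) (L : List G) :
    (QuotientGroup.mk ((L.map fun h => h⁻¹ * g * h).prod) : G ⧸ commutatorSubgroup g)
      = (QuotientGroup.mk g : G ⧸ commutatorSubgroup g) ^ L.length := by
  induction L with
  | nil => simp
  | cons a L ih =>
    simp only [List.map_cons, List.prod_cons, List.length_cons]
    rw [QuotientGroup.mk_mul, ih, pow_succ']
    congr 1
    rw [QuotientGroup.eq]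
    have e : (a⁻¹ * g * a)⁻¹ * g = (g⁻¹ * a⁻¹ * g * a)⁻¹ := by group
    rw [e]
    exact inv_mem (Subgroup.subset_closure ⟨a, rfl⟩)

private lemma ofFn_of_list {G : Type*} [Group G] (g : G) (L : List G) :
    (List.ofFn fun i : Fin L.length => (L.get i)⁻¹ * g * (L.get i)).prod
      = (L.map fun h => h⁻¹ * g * h).prod := by
  congr 1
  rw [show (fun i : Fin L.length => (L.get i)⁻¹ * g * L.get i)
      = (fun h : G => h⁻¹ * g * h) ∘ L.get from rfl,
    ← List.map_ofFn, List.ofFn_get]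

/-- If `g ≠ 1` and the image of `g` in `G/[g,G]` has finite order `n ≥ 1`, then the set of
differences `M - M'` over all relations `∏_{i=1}^M hᵢ⁻¹ g hᵢ = ∏_{j=1}^{M'} h'ⱼ⁻¹ g h'ⱼ`
is exactly the set of integer multiples of `n`. -/
theorem lengthDifferences_eq_multiples {G : Type*} [Group G] (g : G) (hg : g ≠ 1)
    (n : ℕ) (hn : 1 ≤ n)
    (hord : orderOf (QuotientGroup.mk g : G ⧸ commutatorSubgroup g) = n) :
    {d : ℤ | ∃ (M M' : ℕ) (h : Fin M → G) (h' : Fin M' → G),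
        (List.ofFn fun i => (h i)⁻¹ * g * h i).prod =
          (List.ofFn fun j => (h' j)⁻¹ * g * h' j).prod ∧
        d = (M : ℤ) - (M' : ℤ)} = {d : ℤ | (n : ℤ) ∣ d} := by
  ext d
  simp only [Set.mem_setOf_eq]
  constructor
  · rintro ⟨M, M', h, h', heq, rfl⟩
    have e1 : (List.ofFn fun i => (h i)⁻¹ * g * h i)
        = ((List.ofFn h).map fun x => x⁻¹ * g * x) := by
      rw [List.map_ofFn]; rfl
    have e2 : (List.ofFn fun j => (h' j)⁻¹ * g * h' j)
        = ((List.ofFn h').map fun x => x⁻¹ * g * x) := by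
      rw [List.map_ofFn]; rfl
    have him := congrArg (QuotientGroup.mk : G → G ⧸ commutatorSubgroup g) heq
    rw [e1, e2, mk_conj_prod, mk_conj_prod] at him
    simp only [List.length_ofFn] at him
    have hz : (QuotientGroup.mk g : G ⧸ commutatorSubgroup g) ^ ((M : ℤ) - (M' : ℤ)) = 1 := by
      rw [zpow_sub, zpow_natCast, zpow_natCast, him, mul_inv_cancel]
    have := orderOf_dvd_iff_zpow_eq_one.mpr hz
    rwa [hord] at this
  · rintro ⟨m, rfl⟩
    have key : ∀ k : ℕ, ∃ (M M' : ℕ) (h : Fin M → G) (h' : Fin M' → G),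
        (List.ofFn fun i => (h i)⁻¹ * g * h i).prod =
          (List.ofFn fun j => (h' j)⁻¹ * g * h' j).prod ∧
        (M : ℤ) - (M' : ℤ) = (n : ℤ) * k := by
      intro k
      have hmem : g ^ (n * k) ∈ commutatorSubgroup g := by
        rw [← QuotientGroup.eq_one_iff]
        have : (QuotientGroup.mk (g ^ (n * k)) : G ⧸ commutatorSubgroup g)
            = (QuotientGroup.mk g : G ⧸ commutatorSubgroup g) ^ (n * k) := by
          simp [QuotientGroup.mk_pow]
        rw [this]
        exact orderOf_dvd_iff_pow_eq_one.mp (hord ▸ Dvd.intro k rfl)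
      obtain ⟨A, B, hlen, hx⟩ := decomp_aux g _ hmem
      set L1 : List G := List.replicate (n * k) (1 : G) ++ B with hL1
      refine ⟨L1.length, A.length, fun i => L1.get i, fun j => A.get j, ?_, ?_⟩
      · rw [ofFn_of_list, ofFn_of_list]
        have hrep : ((List.replicate (n * k) (1 : G)).map fun h => h⁻¹ * g * h).prod
            = g ^ (n * k) := by
          rw [List.map_replicate, List.prod_replicate]
          simp
        rw [hL1, List.map_append, List.prod_append, hrep, hx]
        group
      · simp only [hL1, List.length_append, List.length_replicate, hlen]
        push_cast
        ring
    rcases le_or_gt 0 m with hm | hm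
    · obtain ⟨M, M', h, h', heq, hd⟩ := key m.toNat
      refine ⟨M, M', h, h', heq, ?_⟩
      rw [hd, Int.toNat_of_nonneg hm]
    · obtain ⟨M, M', h, h', heq, hd⟩ := key (-m).toNat
      refine ⟨M', M, h', h, heq.symm, ?_⟩
      rw [Int.toNat_of_nonneg (by omega)] at hd
      linarith
end

section
/- Let G be a group containing an element g ≠ 1 such that g^n = 1 for some integer n > 1. Then for every field k and every nonzero c ∈ k with c^n ≠ 1, the two-sided ideal of the group algebra kG generated by g − c equals all of kG. In particular, no group containing a nonidentity element of finite order is resistant. -/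
/-- A group `G` is resistant if for every field `k`, every element of the group algebra `k G`
whose support has cardinality `> 1` generates a proper two-sided ideal of `k G`. -/
def Resistant (G : Type*) [Group G] : Prop :=
  ∀ (k : Type*) [Field k] (r : MonoidAlgebra k G), 1 < r.coeff.support.card →
    TwoSidedIdeal.span {r} ≠ ⊤

lemma span_aux {G : Type*} [Group G] (g : G) (n : ℕ) (hgn : g ^ n = 1)
    (k : Type*) [Field k] (c : k) (hcn : c ^ n ≠ 1) :
    TwoSidedIdeal.span
      {MonoidAlgebra.of k G g - algebraMap k (MonoidAlgebra k G) c} = ⊤ := by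
  set x : MonoidAlgebra k G := MonoidAlgebra.of k G g
  set y : MonoidAlgebra k G := algebraMap k (MonoidAlgebra k G) c
  set I := TwoSidedIdeal.span {x - y}
  have hxy : x - y ∈ I := TwoSidedIdeal.subset_span rfl
  have hcomm : Commute x y := (Algebra.commutes c x).symm
  have hmem : x ^ n - y ^ n ∈ I := by
    rw [← hcomm.geom_sum₂_mul n]
    exact I.mul_mem_left _ _ hxy
  have hx : x ^ n = 1 := by
    rw [← map_pow, hgn]; exact map_one _
  have hy : y ^ n = algebraMap k (MonoidAlgebra k G) (c ^ n) := (map_pow _ _ _).symm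
  rw [hx, hy] at hmem
  have hunit : (1 : k) - c ^ n ≠ 0 := sub_ne_zero.mpr (Ne.symm hcn)
  have h1 : (1 : MonoidAlgebra k G) ∈ I := by
    have := I.mul_mem_left (algebraMap k (MonoidAlgebra k G) ((1 - c ^ n)⁻¹)) _ hmem
    rwa [show (1 : MonoidAlgebra k G) - algebraMap k (MonoidAlgebra k G) (c ^ n)
        = algebraMap k (MonoidAlgebra k G) (1 - c ^ n) by rw [map_sub, map_one],
      ← map_mul, inv_mul_cancel₀ hunit, map_one] at this
  exact I.eq_top h1

/-- If `G` contains an element `g ≠ 1` with `g^n = 1` for some `n > 1`, then for every field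
`k` and nonzero `c ∈ k` with `c^n ≠ 1`, the two-sided ideal of `k G` generated by `g - c` is
all of `k G`; in particular, `G` is not resistant. -/
theorem not_resistant_of_torsion {G : Type*} [Group G] (g : G) (hg : g ≠ 1)
    (n : ℕ) (hn : 1 < n) (hgn : g ^ n = 1) :
    (∀ (k : Type*) [Field k] (c : k), c ≠ 0 → c ^ n ≠ 1 →
      TwoSidedIdeal.span
        {MonoidAlgebra.of k G g - algebraMap k (MonoidAlgebra k G) c} = ⊤) ∧
    ¬ Resistant G := by
  classical
  constructor
  · intro k _ c _ hcn
    exact span_aux g n hgn k c hcn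
  · intro hres
    set k := ULift.{_} ℚ
    have h2q : (2 : ℚ) ^ n ≠ 1 := ne_of_gt (one_lt_pow₀ (by norm_num) (by omega))
    have h2 : (2 : k) ^ n ≠ 1 := fun h => h2q (by
      have := congrArg ULift.ringEquiv h
      rwa [map_pow, map_ofNat, map_one] at this)
    have h2' : (2 : k) ≠ 0 := fun h => by
      have : ((2 : k).down) = ((0 : k).down) := congrArg ULift.down h
      norm_num [k] at this
    have hspan := span_aux g n hgn k 2 h2
    set r : MonoidAlgebra k G := MonoidAlgebra.of k G g - algebraMap k (MonoidAlgebra k G) 2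
      with hrdef
    have hr : r.coeff = Finsupp.single g 1 + Finsupp.single 1 (-2 : k) := by
      rw [hrdef, sub_eq_add_neg, MonoidAlgebra.coeff_add]
      congr 1
      rw [MonoidAlgebra.coe_algebraMap]
      simp [Finsupp.single_neg]
    have hdisj : Disjoint (Finsupp.single g (1 : k)).support
        (Finsupp.single (1 : G) (-2 : k)).support := by
      rw [Finsupp.support_single_ne_zero g one_ne_zero,
        Finsupp.support_single_ne_zero (1 : G) (neg_ne_zero.mpr h2')]
      simpa using hg
    have hsupp : r.coeff.support = {g} ∪ {1} := by
      rw [hr, Finsupp.support_add_eq hdisj,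
        Finsupp.support_single_ne_zero g one_ne_zero,
        Finsupp.support_single_ne_zero (1 : G) (neg_ne_zero.mpr h2')]
    have hcard : 1 < r.coeff.support.card := by
      rw [hsupp]
      rw [← Finset.insert_eq, Finset.card_insert_of_notMem (by simpa using hg),
        Finset.card_singleton]
      omega
    exact hres k r hcard hspan
end

section
/- Let m and m' be nonzero integers with m ≠ m', let α = m/m' ∈ ℝ, and let G be the subgroup of the group of bijections of ℝ (under composition) generated by the maps g : t ↦ t + 1 and h : t ↦ α·t, and set n = |m − m'|. Then for every field k and every nonzero c ∈ k with c^n ≠ 1, the two-sided ideal of the group algebra kG generated by g − c equals all of kG. In particular, G is not resistant. -/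
private lemma step_up_aux {A : Type*} [Ring A] {X Z W a b cc : A}
    (h1 : X * Z = W) (h2 : a * b = cc) :
    (X - a) * Z + a * (Z - b) = W - cc := by
  rw [← h1, ← h2]; noncomm_ring

private lemma step_dn_aux {A : Type*} [Ring A] {X Y Z W a b cc : A}
    (h1 : X * Y = W) (h2 : Z * Y = 1) (h3 : a * b = cc) :
    (X - cc) * Y - a * ((Z - b) * Y) = W - a := by
  have h4 : a * ((Z - b) * Y) = a - cc * Y := by
    have e : a * ((Z - b) * Y) = a * (Z * Y) - (a * b) * Y := by noncomm_ring
    rw [e, h2, h3, mul_one]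
  rw [h4, ← h1]; noncomm_ring

private lemma span_eq_top_aux {G : Type*} [Group G] (gE hE : G) (m m' : ℤ)
    (hrel' : hE * gE ^ m' * hE⁻¹ = gE ^ m) (n : ℕ) (hn : n = (m - m').natAbs)
    (k : Type*) [Field k] (c : k) (hc : c ≠ 0) (hcn : c ^ n ≠ 1) :
    TwoSidedIdeal.span {MonoidAlgebra.of k G gE - algebraMap k (MonoidAlgebra k G) c} = ⊤ := by
  set A := MonoidAlgebra k G with hA
  set φ := algebraMap k A with hφ
  set o := MonoidAlgebra.of k G with ho
  set I := TwoSidedIdeal.span {o gE - φ c} with hI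
  have hgen : o gE - φ c ∈ I := TwoSidedIdeal.subset_span rfl
  have hczne : ∀ z : ℤ, c ^ z ≠ 0 := fun z => zpow_ne_zero z hc
  have key : ∀ z : ℤ, o (gE ^ z) - φ (c ^ z) ∈ I := by
    intro z
    induction z using Int.induction_on with
    | zero => simpa using I.zero_mem
    | succ i ih =>
        have h1 : o (gE ^ (i : ℤ)) * o gE = o (gE ^ ((i : ℤ) + 1)) := by
          rw [← map_mul, ← zpow_add_one]
        have h2 : φ (c ^ (i : ℤ)) * φ c = φ (c ^ ((i : ℤ) + 1)) := by
          rw [← map_mul, ← zpow_add_one₀ hc]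
        rw [← step_up_aux h1 h2]
        exact I.add_mem (I.mul_mem_right _ _ ih) (I.mul_mem_left _ _ hgen)
    | pred i ih =>
        have h1 : o (gE ^ (-(i : ℤ))) * o gE⁻¹ = o (gE ^ (-(i : ℤ) - 1)) := by
          rw [← map_mul, ← zpow_sub_one]
        have h2 : o gE * o gE⁻¹ = 1 := by
          rw [← map_mul, mul_inv_cancel, map_one]
        have h3 : φ (c ^ (-(i : ℤ) - 1)) * φ c = φ (c ^ (-(i : ℤ))) := by
          rw [← map_mul, ← zpow_add_one₀ hc]
          norm_num
        rw [← step_dn_aux h1 h2 h3]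
        exact I.sub_mem (I.mul_mem_right _ _ ih)
          (I.mul_mem_left _ _ (I.mul_mem_right _ _ hgen))
  have hm'mem := key m'
  have hmmem := key m
  have conjmem : o hE * (o (gE ^ m') - φ (c ^ m')) * o hE⁻¹ ∈ I :=
    I.mul_mem_right _ _ (I.mul_mem_left _ _ hm'mem)
  have conjeq : o hE * (o (gE ^ m') - φ (c ^ m')) * o hE⁻¹ = o (gE ^ m) - φ (c ^ m') := by
    have e1 : o hE * o (gE ^ m') * o hE⁻¹ = o (gE ^ m) := by
      rw [← map_mul, ← map_mul, hrel']
    have e2 : o hE * φ (c ^ m') * o hE⁻¹ = φ (c ^ m') := by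
      rw [← Algebra.commutes, mul_assoc, ← map_mul, mul_inv_cancel, map_one, mul_one]
    rw [mul_sub, sub_mul, e1, e2]
  rw [conjeq] at conjmem
  have scal : φ (c ^ m - c ^ m') ∈ I := by
    have hs := I.sub_mem conjmem hmmem
    have e : (o (gE ^ m) - φ (c ^ m')) - (o (gE ^ m) - φ (c ^ m)) = φ (c ^ m - c ^ m') := by
      rw [map_sub]; abel
    rwa [e] at hs
  have hd : c ^ m - c ^ m' ≠ 0 := by
    intro hcc
    have heq : c ^ m = c ^ m' := by linear_combination hcc
    have h1 : c ^ (m - m') = 1 := by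
      rw [zpow_sub₀ hc, heq, div_self (hczne m')]
    rcases Int.natAbs_eq (m - m') with he | he
    · apply hcn
      have hcast : ((n : ℤ)) = m - m' := by omega
      rw [← zpow_natCast c n, hcast, h1]
    · apply hcn
      have hcast : (-(n : ℤ)) = m - m' := by omega
      have hone : c ^ (-(n : ℤ)) = 1 := by rw [hcast, h1]
      rwa [zpow_neg, inv_eq_one, zpow_natCast] at hone
  have one_mem : (1 : A) ∈ I := by
    have hmul := I.mul_mem_left (φ (c ^ m - c ^ m')⁻¹) _ scal
    rwa [← map_mul, inv_mul_cancel₀ hd, map_one] at hmul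
  exact I.eq_top one_mem

universe u

private lemma ulift_two_aux {n : ℕ} (hn0 : n ≠ 0) :
    (2 : ULift.{u} ℚ) ≠ 0 ∧ (2 : ULift.{u} ℚ) ^ n ≠ 1 := by
  constructor
  · intro hc
    have hc' := congrArg (ULift.ringEquiv : ULift ℚ ≃+* ℚ) hc
    rw [map_ofNat, map_zero] at hc'
    norm_num at hc'
  · intro hc
    have hc' := congrArg (ULift.ringEquiv : ULift ℚ ≃+* ℚ) hc
    rw [map_pow, map_ofNat, map_one] at hc'
    have h1 : (1 : ℚ) < 2 ^ n := one_lt_pow₀ (by norm_num) hn0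
    rw [hc'] at h1
    exact lt_irrefl _ h1

private lemma card_aux {G : Type*} [Group G] {a : G} (ha : a ≠ 1) (k : Type*) [Field k]
    (c : k) (hc : c ≠ 0) :
    1 < (MonoidAlgebra.of k G a - algebraMap k (MonoidAlgebra k G) c).coeff.support.card := by
  classical
  have hac : algebraMap k (MonoidAlgebra k G) c = MonoidAlgebra.single (1 : G) c := by
    rw [Algebra.algebraMap_eq_smul_one, MonoidAlgebra.one_def, MonoidAlgebra.smul_single',
      mul_one]
  have req : MonoidAlgebra.of k G a - algebraMap k (MonoidAlgebra k G) c =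
      MonoidAlgebra.single a (1 : k) + MonoidAlgebra.single (1 : G) (-c) := by
    rw [MonoidAlgebra.of_apply, hac, sub_eq_add_neg,
      ← neg_one_smul k (MonoidAlgebra.single (1 : G) c), MonoidAlgebra.smul_single',
      neg_one_mul]
  have hdis : Disjoint (Finsupp.single a (1 : k)).support
      (Finsupp.single (1 : G) (-c)).support := by
    rw [Finsupp.support_single_ne_zero _ (one_ne_zero),
      Finsupp.support_single_ne_zero _ (neg_ne_zero.mpr hc)]
    simpa using ha
  rw [req, MonoidAlgebra.coeff_add, MonoidAlgebra.coeff_single, MonoidAlgebra.coeff_single,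
    Finsupp.support_add_eq hdis, Finsupp.support_single_ne_zero _ (one_ne_zero),
    Finsupp.support_single_ne_zero _ (neg_ne_zero.mpr hc),
    Finset.card_union_of_disjoint (by simpa using ha)]
  norm_num

/-- Let `α = m/m'` for nonzero integers `m ≠ m'`, and let `G` be the subgroup of the group of
bijections of `ℝ` generated by `g : t ↦ t + 1` and `h : t ↦ α·t`, and put `n = |m - m'|`.
Then for every field `k` and nonzero `c ∈ k` with `c^n ≠ 1`, the two-sided ideal of `k G`
generated by `g - c` is all of `k G`; in particular, `G` is not resistant. -/
theorem affine_group_not_resistant (m m' : ℤ) (hm : m ≠ 0) (hm' : m' ≠ 0) (hmm : m ≠ m')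
    (g h : Equiv.Perm ℝ)
    (hg : ∀ t : ℝ, g t = t + 1)
    (hh : ∀ t : ℝ, h t = ((m : ℝ) / (m' : ℝ)) * t)
    (n : ℕ) (hn : n = (m - m').natAbs) :
    (∀ (k : Type*) [Field k] (c : k), c ≠ 0 → c ^ n ≠ 1 →
      TwoSidedIdeal.span
        {MonoidAlgebra.of k ↥(Subgroup.closure {g, h})
            ⟨g, Subgroup.subset_closure (Set.mem_insert _ _)⟩ -
          algebraMap k (MonoidAlgebra k ↥(Subgroup.closure {g, h})) c} = ⊤) ∧
    ¬ Resistant ↥(Subgroup.closure {g, h}) := by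
  classical
  have hα : ((m' : ℝ)) ≠ 0 := Int.cast_ne_zero.mpr hm'
  have hginv : ∀ t : ℝ, g⁻¹ t = t - 1 := by
    intro t
    have := hg (g⁻¹ t)
    rw [show g (g⁻¹ t) = t from g.apply_symm_apply t] at this
    linarith
  have hgz : ∀ (z : ℤ) (t : ℝ), (g ^ z) t = t + z := by
    intro z
    induction z using Int.induction_on with
    | zero => intro t; simp
    | succ i ih =>
        intro t
        rw [zpow_add_one, Equiv.Perm.mul_apply, hg, ih]
        push_cast; ring
    | pred i ih =>
        intro t
        rw [zpow_sub_one, Equiv.Perm.mul_apply, hginv, ih]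
        push_cast; ring
  have hrel : h * g ^ m' * h⁻¹ = g ^ m := by
    ext t
    have hht : h (h⁻¹ t) = t := h.apply_symm_apply t
    rw [hh] at hht
    rw [Equiv.Perm.mul_apply, Equiv.Perm.mul_apply, hgz, hh, hgz, mul_add, hht]
    congr 1
    field_simp
  set G' := Subgroup.closure {g, h} with hG'
  have hgmem : g ∈ G' := Subgroup.subset_closure (Set.mem_insert _ _)
  have hhmem : h ∈ G' := Subgroup.subset_closure (Set.mem_insert_of_mem _ rfl)
  set gE : G' := ⟨g, hgmem⟩ with hgE
  set hE : G' := ⟨h, hhmem⟩ with hhE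
  have hrel' : hE * gE ^ m' * hE⁻¹ = gE ^ m := by
    ext1
    push_cast
    exact hrel
  have hgEne : gE ≠ 1 := by
    intro hc
    have hgid : g = 1 := congrArg Subtype.val hc
    have h0 := hg 0
    rw [hgid] at h0
    simp at h0
  have hn0 : n ≠ 0 := by
    rw [hn]
    simpa [Int.natAbs_eq_zero, sub_eq_zero] using hmm
  refine ⟨fun k _ c hc hcn => span_eq_top_aux gE hE m m' hrel' n hn k c hc hcn, ?_⟩
  intro hres
  exact hres (ULift ℚ) _ (card_aux hgEne (ULift ℚ) 2 (ulift_two_aux hn0).1)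
    (span_eq_top_aux gE hE m m' hrel' n hn (ULift ℚ) 2 (ulift_two_aux hn0).1
      (ulift_two_aux hn0).2)
end

section
/- Let G be a group containing elements h ≠ h' with h^n = h'^n for some integer n > 1, and set g = h⁻¹h'. Then g ≠ 1, and for every field k and every nonzero c ∈ k with c^n ≠ 1, the two-sided ideal of the group algebra kG generated by g − c equals all of kG. In particular, such a group G is not resistant. -/
theorem span_top_aux {G : Type*} [Group G] (h h' : G)
    (n : ℕ) (hpow : h ^ n = h' ^ n)
    (k : Type*) [Field k] (c : k) (hcn : c ^ n ≠ 1) :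
    TwoSidedIdeal.span
      {MonoidAlgebra.of k G (h⁻¹ * h') - algebraMap k (MonoidAlgebra k G) c} = ⊤ := by
  set r : MonoidAlgebra k G :=
    MonoidAlgebra.of k G (h⁻¹ * h') - algebraMap k (MonoidAlgebra k G) c with hr
  set I := TwoSidedIdeal.span {r} with hI
  have hrI : r ∈ I := TwoSidedIdeal.subset_span rfl
  have key : ∀ m : ℕ,
      MonoidAlgebra.of k G ((h ^ m)⁻¹ * h' ^ m) - algebraMap k (MonoidAlgebra k G) (c ^ m) ∈ I := by
    intro m
    induction m with
    | zero => simp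
    | succ m ih =>
      have hgrp : (h ^ (m + 1))⁻¹ * h' ^ (m + 1) =
          h⁻¹ * ((h ^ m)⁻¹ * h' ^ m) * h' := by
        rw [pow_succ, pow_succ, mul_inv_rev]
        group
      set a := MonoidAlgebra.of k G h⁻¹
      set b := MonoidAlgebra.of k G h'
      set X := MonoidAlgebra.of k G ((h ^ m)⁻¹ * h' ^ m)
      have hab : MonoidAlgebra.of k G (h⁻¹ * h') = a * b := map_mul _ _ _
      have hX : MonoidAlgebra.of k G ((h ^ (m + 1))⁻¹ * h' ^ (m + 1)) = a * X * b := by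
        rw [hgrp, map_mul, map_mul]
      set Cm := algebraMap k (MonoidAlgebra k G) (c ^ m)
      set Cc := algebraMap k (MonoidAlgebra k G) c
      have h1 : a * Cm = Cm * a := (Algebra.commutes (c ^ m) a).symm
      have h2 : algebraMap k (MonoidAlgebra k G) (c ^ (m + 1)) = Cm * Cc := by
        rw [← map_mul, ← pow_succ]
      have keyeq : a * X * b - algebraMap k (MonoidAlgebra k G) (c ^ (m + 1)) =
          a * (X - Cm) * b + Cm * (a * b - Cc) := by
        rw [h2, mul_sub, sub_mul, mul_sub, h1, mul_assoc Cm a b]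
        abel
      rw [hX, keyeq]
      refine I.add_mem ?_ ?_
      · exact I.mul_mem_right _ _ (I.mul_mem_left _ _ ih)
      · exact I.mul_mem_left _ _ (by rw [hr, hab] at hrI; exact hrI)
  have hone : (1 : MonoidAlgebra k G) - algebraMap k (MonoidAlgebra k G) (c ^ n) ∈ I := by
    have := key n
    rwa [hpow, inv_mul_cancel, map_one] at this
  have hunit : (1 : MonoidAlgebra k G) ∈ I := by
    have hne : (1 : k) - c ^ n ≠ 0 := sub_ne_zero.mpr (Ne.symm hcn)
    have h3 : (1 : MonoidAlgebra k G) - algebraMap k (MonoidAlgebra k G) (c ^ n) =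
        algebraMap k (MonoidAlgebra k G) (1 - c ^ n) := by rw [map_sub, map_one]
    have := I.mul_mem_left (algebraMap k (MonoidAlgebra k G) (1 - c ^ n)⁻¹) _ hone
    rwa [h3, ← map_mul, inv_mul_cancel₀ hne, map_one] at this
  exact I.eq_top hunit


/-- If `G` contains elements `h ≠ h'` with `h^n = h'^n` for some `n > 1`, then with
`g = h⁻¹h'` one has `g ≠ 1`, and for every field `k` and nonzero `c ∈ k` with `c^n ≠ 1`, the
two-sided ideal of `k G` generated by `g - c` is all of `k G`; in particular, `G` is not
resistant. -/
theorem not_resistant_of_eq_pow {G : Type*} [Group G] (h h' : G) (hne : h ≠ h')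
    (n : ℕ) (hn : 1 < n) (hpow : h ^ n = h' ^ n) :
    h⁻¹ * h' ≠ 1 ∧
    (∀ (k : Type*) [Field k] (c : k), c ≠ 0 → c ^ n ≠ 1 →
      TwoSidedIdeal.span
        {MonoidAlgebra.of k G (h⁻¹ * h') - algebraMap k (MonoidAlgebra k G) c} = ⊤) ∧
    ¬ Resistant G := by
  have hg1 : h⁻¹ * h' ≠ 1 := by
    intro hc
    exact hne (inv_mul_eq_one.mp hc)
  refine ⟨hg1, fun k _ c _ hcn => span_top_aux h h' n hpow k c hcn, ?_⟩
  intro hres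
  have h2n : (2 : ULift.{u_3} ℚ) ^ n ≠ 1 := by
    intro he
    apply_fun (ULift.ringEquiv : ULift ℚ ≃+* ℚ) at he
    rw [map_pow, map_ofNat, map_one] at he
    have : (1 : ℚ) < 2 ^ n := one_lt_pow₀ one_lt_two (by omega)
    exact ne_of_gt this he
  have h20 : (2 : ULift.{u_3} ℚ) ≠ 0 := by
    intro he
    apply_fun (ULift.ringEquiv : ULift ℚ ≃+* ℚ) at he
    rw [map_ofNat, map_zero] at he
    norm_num at he
  set K := ULift.{u_3} ℚ
  set r : MonoidAlgebra K G :=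
    MonoidAlgebra.of K G (h⁻¹ * h') - algebraMap K (MonoidAlgebra K G) 2 with hr
  have hcard : 1 < r.coeff.support.card := by
    classical
    have happ : ∀ x : G, r.coeff x =
        (MonoidAlgebra.of K G (h⁻¹ * h')).coeff x - (algebraMap K (MonoidAlgebra K G) 2).coeff x :=
      fun x => Finsupp.sub_apply _ _ _
    have hmem1 : h⁻¹ * h' ∈ r.coeff.support := by
      rw [Finsupp.mem_support_iff, happ]
      simp [MonoidAlgebra.of_apply, MonoidAlgebra.coe_algebraMap, MonoidAlgebra.coeff_single,
        Finsupp.single_apply, hg1, (Ne.symm hg1), h20]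
    have hmem2 : (1 : G) ∈ r.coeff.support := by
      rw [Finsupp.mem_support_iff, happ]
      simp [MonoidAlgebra.of_apply, MonoidAlgebra.coe_algebraMap, MonoidAlgebra.coeff_single,
        Finsupp.single_apply, hg1, (Ne.symm hg1), h20]
    exact Finset.one_lt_card.mpr ⟨_, hmem1, _, hmem2, hg1⟩
  exact hres K r hcard (span_top_aux h h' n hpow K 2 h2n)
end

section
/- Let G be a group with elements g, h such that the normal subgroup N of G generated by the commutator [g,h] contains an element f ≠ 1 which commutes with g in G. Then the elements 1, h, f of G are pairwise distinct, and for every field k the two-sided ideal of the group algebra kG generated by the element 1 + h − f equals all of kG. -/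
/-- If the normal subgroup of `G` generated by `[g,h] = g⁻¹h⁻¹gh` contains an element `f ≠ 1`
commuting with `g`, then `1`, `h`, `f` are pairwise distinct, and for every field `k` the
two-sided ideal of `k G` generated by the trinomial `1 + h - f` is all of `k G`. -/
theorem trinomial_span_eq_top {G : Type*} [Group G] (g h f : G)
    (hfN : f ∈ Subgroup.normalClosure ({g⁻¹ * h⁻¹ * g * h} : Set G))
    (hf1 : f ≠ 1) (hfg : f * g = g * f) :
    (h ≠ 1 ∧ f ≠ 1 ∧ h ≠ f) ∧
    ∀ (k : Type*) [Field k],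
      TwoSidedIdeal.span
        {(1 : MonoidAlgebra k G) + MonoidAlgebra.of k G h - MonoidAlgebra.of k G f} = ⊤ := by
  constructor
  · refine ⟨?_, hf1, ?_⟩
    · rintro rfl
      have : Subgroup.normalClosure ({g⁻¹ * 1⁻¹ * g * 1} : Set G) ≤ ⊥ :=
        Subgroup.normalClosure_le_normal (by simp)
      exact hf1 (by simpa using this hfN)
    · rintro rfl
      have hc : g⁻¹ * h⁻¹ * g * h = 1 := by
        rw [mul_assoc (g⁻¹ * h⁻¹), ← hfg]
        simp [mul_assoc]
      have : Subgroup.normalClosure ({g⁻¹ * h⁻¹ * g * h} : Set G) ≤ ⊥ :=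
        Subgroup.normalClosure_le_normal (by simp [hc])
      exact hf1 (by simpa using this hfN)
  · intro k _
    set o : G →* MonoidAlgebra k G := MonoidAlgebra.of k G with ho
    set I := TwoSidedIdeal.span
      {(1 : MonoidAlgebra k G) + o h - o f} with hI
    have ht : (1 : MonoidAlgebra k G) + o h - o f ∈ I :=
      TwoSidedIdeal.subset_span rfl
    -- conjugation stability within I
    have conj : ∀ x y : G, o x - o y ∈ I → ∀ z w : G, o (z * x * w) - o (z * y * w) ∈ I := by
      intro x y hxy z w
      have := I.mul_mem_right _ (o w) (I.mul_mem_left (o z) _ hxy)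
      simpa [mul_sub, sub_mul, map_mul] using this
    -- conjugate the trinomial by g
    have ht2 : (1 : MonoidAlgebra k G) + o (g * h * g⁻¹) - o f ∈ I := by
      have hmem := I.mul_mem_right _ (o g⁻¹) (I.mul_mem_left (o g) _ ht)
      have hgf : g * f * g⁻¹ = f := by
        rw [← hfg, mul_assoc, mul_inv_cancel, mul_one]
      have he : o g * (1 + o h - o f) * o g⁻¹
          = (1 : MonoidAlgebra k G) + o (g * h * g⁻¹) - o f := by
        simp only [mul_sub, mul_add, sub_mul, add_mul, mul_one, one_mul, ← map_mul,
          mul_inv_cancel, map_one, hgf]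
      rwa [he] at hmem
    have hsub : o (g * h * g⁻¹) - o h ∈ I := by
      have := I.sub_mem ht2 ht
      have he : ((1 : MonoidAlgebra k G) + o (g * h * g⁻¹) - o f) - (1 + o h - o f)
          = o (g * h * g⁻¹) - o h := by abel
      rwa [he] at this
    -- commutator is ≡ 1 mod I
    have hc : o (g⁻¹ * h⁻¹ * g * h) - 1 ∈ I := by
      have := conj _ _ hsub (g⁻¹ * h⁻¹) g
      have e1 : g⁻¹ * h⁻¹ * (g * h * g⁻¹) * g = g⁻¹ * h⁻¹ * g * h := by group
      have e2 : g⁻¹ * h⁻¹ * h * g = 1 := by group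
      rwa [e1, e2, map_one] at this
    -- the set of group elements ≡ 1 mod I is a normal subgroup
    let K : Subgroup G :=
      { carrier := {x | o x - 1 ∈ I}
        one_mem' := by simp [I.zero_mem]
        mul_mem' := by
          intro x y hx hy
          show o (x * y) - 1 ∈ I
          have he : o x * (o y - 1) + (o x - 1) = o (x * y) - 1 := by
            rw [map_mul, mul_sub, mul_one]; abel
          rw [← he]
          exact I.add_mem (I.mul_mem_left _ _ hy) hx
        inv_mem' := by
          intro x hx
          show o x⁻¹ - 1 ∈ I
          have he : -(o x⁻¹ * (o x - 1)) = o x⁻¹ - 1 := by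
            rw [mul_sub, mul_one, ← map_mul, inv_mul_cancel, map_one, neg_sub]
          rw [← he]
          exact I.neg_mem (I.mul_mem_left _ _ hx) }
    have hKn : K.Normal := by
      constructor
      intro x hx z
      show o (z * x * z⁻¹) - 1 ∈ I
      have he : o z * (o x - 1) * o z⁻¹ = o (z * x * z⁻¹) - 1 := by
        rw [mul_sub, mul_one, sub_mul, ← map_mul, ← map_mul, ← map_mul, mul_inv_cancel, map_one]
      rw [← he]
      exact I.mul_mem_right _ (o z⁻¹) (I.mul_mem_left (o z) _ hx)
    have hfK : o f - 1 ∈ I := by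
      have hle : Subgroup.normalClosure ({g⁻¹ * h⁻¹ * g * h} : Set G) ≤ K :=
        Subgroup.normalClosure_le_normal (by intro x hx; simp at hx; subst hx; exact hc)
      exact hle hfN
    have hh : o h ∈ I := by
      have := I.add_mem ht hfK
      have he : ((1 : MonoidAlgebra k G) + o h - o f) + (o f - 1) = o h := by abel
      rwa [he] at this
    have h1 : (1 : MonoidAlgebra k G) ∈ I := by
      have := I.mul_mem_left (o h⁻¹) _ hh
      rwa [← map_mul, inv_mul_cancel, map_one] at this
    exact TwoSidedIdeal.one_mem_iff I |>.mp h1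
end

section
/- Let G be a group and g, h ∈ G such that g commutes with its conjugate h⁻¹gh and h⁻¹gh ≠ g. Then for every field k, the two-sided ideal of the group algebra kG generated by the element 1 + h − [g,h] equals all of kG. -/
/-- If `g` commutes with its conjugate `h⁻¹gh ≠ g`, then for every field `k` the two-sided
ideal of `k G` generated by the trinomial `1 + h - [g,h]` is all of `k G`. -/
theorem trinomial_span_eq_top_of_commuting_conjugate {G : Type*} [Group G] (g h : G)
    (hcomm : g * (h⁻¹ * g * h) = (h⁻¹ * g * h) * g) (hne : h⁻¹ * g * h ≠ g)
    (k : Type*) [Field k] :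
    TwoSidedIdeal.span
      {(1 : MonoidAlgebra k G) + MonoidAlgebra.of k G h -
        MonoidAlgebra.of k G (g⁻¹ * h⁻¹ * g * h)} = ⊤ := by
  set o : G →* MonoidAlgebra k G := MonoidAlgebra.of k G with ho
  set c : G := g⁻¹ * h⁻¹ * g * h with hc
  set α : MonoidAlgebra k G := 1 + o h - o c with hα
  set I := TwoSidedIdeal.span {α} with hI
  -- group-theoretic facts
  have hw1 : g⁻¹ * c * g = c := by
    have h1 : g * c = h⁻¹ * g * h := by rw [hc]; group
    have h2 : c * g = h⁻¹ * g * h := by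
      calc c * g = g⁻¹ * ((h⁻¹ * g * h) * g) := by rw [hc]; group
        _ = g⁻¹ * (g * (h⁻¹ * g * h)) := by rw [hcomm]
        _ = h⁻¹ * g * h := by group
    rw [mul_assoc, h2, ← h1]; group
  -- memberships
  have hmem : α ∈ I := TwoSidedIdeal.subset_span rfl
  have h2 : o g⁻¹ * α * o g ∈ I := I.mul_mem_right _ _ (I.mul_mem_left _ _ hmem)
  have h3 : α - o g⁻¹ * α * o g ∈ I := I.sub_mem hmem h2
  have h4 : o (c * h⁻¹) * (α - o g⁻¹ * α * o g) ∈ I := I.mul_mem_left _ _ h3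
  have h5 : α + o (c * h⁻¹) * (α - o g⁻¹ * α * o g) ∈ I := I.add_mem hmem h4
  have h6 : o h⁻¹ * (α + o (c * h⁻¹) * (α - o g⁻¹ * α * o g)) ∈ I := I.mul_mem_left _ _ h5
  have hone : (1 : MonoidAlgebra k G) ∈ I := by
    have key : ∀ x y : G, o x * o y = o (x * y) := fun x y => (map_mul o x y).symm
    have e2 : o g⁻¹ * α * o g = 1 + o (g⁻¹ * (h * g)) - o c := by
      rw [hα]
      simp only [mul_sub, mul_add, sub_mul, add_mul, mul_one, one_mul, key]
      rw [show g⁻¹ * g = 1 by group, map_one, show g⁻¹ * h * g = g⁻¹ * (h * g) by group,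
        show g⁻¹ * c * g = c from hw1]
    have e3 : α - o g⁻¹ * α * o g = o h - o (g⁻¹ * (h * g)) := by
      rw [e2, hα]; abel
    have e4 : o (c * h⁻¹) * (o h - o (g⁻¹ * (h * g))) = o c - 1 := by
      rw [mul_sub, key, key, show c * h⁻¹ * h = c by group,
        show c * h⁻¹ * (g⁻¹ * (h * g)) = 1 by rw [hc]; group, map_one]
    have e5 : α + (o c - 1) = o h := by rw [hα]; abel
    have : o h⁻¹ * (α + o (c * h⁻¹) * (α - o g⁻¹ * α * o g)) = 1 := by
      rw [e3, e4, e5, key, show h⁻¹ * h = 1 by group, map_one]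
    rwa [this] at h6
  exact I.eq_top hone
end

section
/- Every nonabelian solvable group G contains elements g and h such that g commutes with h⁻¹gh and h⁻¹gh ≠ g. Consequently, for every field k the group algebra kG contains an element with support of cardinality 3 (namely 1 + h − [g,h]) which generates the improper two-sided ideal, all of kG; hence a nonabelian solvable group is not k-resistant for any field k. -/
open Classical in

lemma exists_good {G : Type*} [Group G] [Group.IsSolvable G]
    (hna : ¬ ∀ a b : G, a * b = b * a) :
    ∃ g h : G, g * (h⁻¹ * g * h) = (h⁻¹ * g * h) * g ∧ h⁻¹ * g * h ≠ g := by
  obtain ⟨m, hm⟩ := Group.IsSolvable.solvable (G := G)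
  have hex : ∃ n, ∀ a ∈ derivedSeries G n, ∀ b ∈ derivedSeries G n, a * b = b * a := by
    refine ⟨m, fun a ha b hb => ?_⟩
    rw [hm, Subgroup.mem_bot] at ha hb
    simp [ha, hb]
  set n := Nat.find hex with hn
  have hPn := Nat.find_spec hex
  have hn0 : n ≠ 0 := by
    intro h0
    apply hna
    intro a b
    exact hPn _ (by simp [← hn, h0, derivedSeries_zero]) _ (by simp [← hn, h0, derivedSeries_zero])
  obtain ⟨p, hp⟩ := Nat.exists_eq_succ_of_ne_zero hn0
  have hPp : ¬ ∀ a ∈ derivedSeries G p, ∀ b ∈ derivedSeries G p, a * b = b * a :=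
    Nat.find_min hex (by omega)
  push_neg at hPp
  obtain ⟨a, ha, b, hb, hab⟩ := hPp
  by_cases hc : ∀ x ∈ derivedSeries G n, ∀ t : G, t * x * t⁻¹ = x
  · -- central case
    refine ⟨a, b, ?_, ?_⟩
    · have hcmem : a⁻¹ * b⁻¹ * a * b ∈ derivedSeries G n := by
        rw [hp, derivedSeries_succ]
        have := Subgroup.commutator_mem_commutator (inv_mem ha) (inv_mem hb)
        simpa [commutatorElement_def, mul_assoc] using this
      have hca : a * (a⁻¹ * b⁻¹ * a * b) * a⁻¹ = a⁻¹ * b⁻¹ * a * b := hc _ hcmem a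
      have h1 : b⁻¹ * a * b = a * (a⁻¹ * b⁻¹ * a * b) := by group
      rw [h1]
      calc a * (a * (a⁻¹ * b⁻¹ * a * b)) = a * ((a * (a⁻¹ * b⁻¹ * a * b) * a⁻¹) * a) := by group
        _ = a * ((a⁻¹ * b⁻¹ * a * b) * a) := by rw [hca]
        _ = a * (a⁻¹ * b⁻¹ * a * b) * a := by group
    · intro heq
      apply hab
      have : b⁻¹ * a * b = a := heq
      calc a * b = b * (b⁻¹ * a * b) := by group
        _ = b * a := by rw [this]
  · push_neg at hc
    obtain ⟨x, hx, t, ht⟩ := hc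
    refine ⟨x, t⁻¹, ?_, ?_⟩
    · have h1 : t⁻¹⁻¹ * x * t⁻¹ ∈ derivedSeries G n := by
        simpa [mul_assoc] using (derivedSeries_normal G n).conj_mem x hx t
      exact hPn _ hx _ h1
    · simpa [mul_assoc] using ht


lemma span_top {G : Type*} (k : Type*) [Group G] [Field k] {g h : G}
    (hcomm : g * (h⁻¹ * g * h) = (h⁻¹ * g * h) * g) :
    TwoSidedIdeal.span {(1 : MonoidAlgebra k G) + MonoidAlgebra.of k G h -
      MonoidAlgebra.of k G (g⁻¹ * h⁻¹ * g * h)} = ⊤ := by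
  set c : G := g⁻¹ * h⁻¹ * g * h with hc
  set O : G →* MonoidAlgebra k G := MonoidAlgebra.of k G with hO
  set r : MonoidAlgebra k G := 1 + O h - O c with hr
  set I : TwoSidedIdeal (MonoidAlgebra k G) := TwoSidedIdeal.span {r} with hI
  have f1 : g⁻¹ * c * g = c := by
    have h1 : c * g = g * c := by
      calc c * g = g⁻¹ * ((h⁻¹ * g * h) * g) := by rw [hc]; group
        _ = g⁻¹ * (g * (h⁻¹ * g * h)) := by rw [← hcomm]
        _ = g * c := by rw [hc]; group
    calc g⁻¹ * c * g = g⁻¹ * (c * g) := by group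
      _ = g⁻¹ * (g * c) := by rw [h1]
      _ = c := by group
  have hrI : r ∈ I := TwoSidedIdeal.subset_span (Set.mem_singleton _)
  have m1 : O g⁻¹ * r * O g ∈ I := I.mul_mem_right _ _ (I.mul_mem_left _ _ hrI)
  have e1 : O g⁻¹ * r * O g = 1 + O (g⁻¹ * h * g) - O c := by
    have expand : O g⁻¹ * r * O g
        = O g⁻¹ * O g + O g⁻¹ * O h * O g - O g⁻¹ * O c * O g := by
      rw [hr]; noncomm_ring
    rw [expand, ← map_mul, ← map_mul, ← map_mul, ← map_mul, ← map_mul,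
      inv_mul_cancel, map_one, show g⁻¹ * c * g = c from f1]
  have m2 : O h - O (g⁻¹ * h * g) ∈ I := by
    have := I.sub_mem hrI m1
    rw [e1, hr] at this
    have e2 : (1 + O h - O c) - (1 + O (g⁻¹ * h * g) - O c) = O h - O (g⁻¹ * h * g) := by
      abel
    rwa [e2] at this
  have m3 : (1 : MonoidAlgebra k G) - O (h⁻¹ * (g⁻¹ * h * g)) ∈ I := by
    have := I.mul_mem_left (O h⁻¹) _ m2
    rwa [mul_sub, ← map_mul, ← map_mul, inv_mul_cancel, map_one] at this
  have m4 : O c - 1 ∈ I := by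
    have := I.mul_mem_left (O c) _ m3
    have e4 : c * (h⁻¹ * (g⁻¹ * h * g)) = 1 := by rw [hc]; group
    rwa [mul_sub, mul_one, ← map_mul, e4, map_one] at this
  have m5 : O h ∈ I := by
    have := I.add_mem hrI m4
    have e5 : r + (O c - 1) = O h := by rw [hr]; abel
    rwa [e5] at this
  have m6 : (1 : MonoidAlgebra k G) ∈ I := by
    have := I.mul_mem_left (O h⁻¹) _ m5
    rwa [← map_mul, inv_mul_cancel, map_one] at this
  exact I.eq_top m6

lemma supp3 {G : Type*} (k : Type*) [Group G] [Field k] {h c : G}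
    (h1 : h ≠ 1) (hc1 : c ≠ 1) (hhc : h ≠ c) :
    ((1 : MonoidAlgebra k G) + MonoidAlgebra.of k G h -
      MonoidAlgebra.of k G c).coeff.support.card = 3 := by
  classical
  have e : ((1 : MonoidAlgebra k G) + MonoidAlgebra.of k G h - MonoidAlgebra.of k G c).coeff
      = Finsupp.single 1 1 + (Finsupp.single h 1 + Finsupp.single c (-1 : k)) := by
    rw [MonoidAlgebra.coeff_sub, MonoidAlgebra.coeff_add, MonoidAlgebra.one_def,
      MonoidAlgebra.of_apply, MonoidAlgebra.of_apply, MonoidAlgebra.coeff_single,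
      MonoidAlgebra.coeff_single, MonoidAlgebra.coeff_single]
    rw [Finsupp.single_neg c (1 : k)]
    abel
  rw [e]
  have s1 : (Finsupp.single h (1:k) + Finsupp.single c (-1 : k)).support = {h, c} := by
    rw [Finsupp.support_add_eq]
    · rw [Finsupp.support_single_ne_zero h one_ne_zero,
        Finsupp.support_single_ne_zero c (by norm_num)]
      rfl
    · rw [Finsupp.support_single_ne_zero h one_ne_zero,
        Finsupp.support_single_ne_zero c (by norm_num)]
      simp [hhc]
  rw [Finsupp.support_add_eq, s1, Finsupp.support_single_ne_zero 1 one_ne_zero]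
  · rw [show ({1} ∪ {h, c} : Finset G) = insert 1 {h, c} by ext x; simp; tauto,
      Finset.card_insert_of_notMem (by simp [Ne.symm h1, Ne.symm hc1]),
      Finset.card_insert_of_notMem (by simp [hhc]), Finset.card_singleton]
  · rw [s1, Finsupp.support_single_ne_zero 1 one_ne_zero,
      Finset.disjoint_singleton_left]
    simp [Ne.symm h1, Ne.symm hc1]

/-- A group `G` is `k`-resistant if every element of the group algebra `k G` whose support
has cardinality `> 1` generates a proper two-sided ideal of `k G`. -/
def KResistant (k : Type*) [Field k] (G : Type*) [Group G] : Prop :=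
  ∀ r : MonoidAlgebra k G, 1 < r.coeff.support.card → TwoSidedIdeal.span {r} ≠ ⊤

/-- Every nonabelian solvable group `G` contains `g, h` with `g` commuting with `h⁻¹gh ≠ g`;
consequently, for every field `k`, the group algebra `k G` contains an element with support of
cardinality `3`, namely `1 + h - [g,h]`, generating the improper two-sided ideal; hence `G` is
not `k`-resistant for any field `k`. -/
theorem nonabelian_solvable_not_kresistant {G : Type*} [Group G] [Group.IsSolvable G]
    (hna : ¬ ∀ a b : G, a * b = b * a) :
    (∃ g h : G, g * (h⁻¹ * g * h) = (h⁻¹ * g * h) * g ∧ h⁻¹ * g * h ≠ g ∧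
      ∀ (k : Type*) [Field k],
        ((1 : MonoidAlgebra k G) + MonoidAlgebra.of k G h -
          MonoidAlgebra.of k G (g⁻¹ * h⁻¹ * g * h)).coeff.support.card = 3 ∧
        TwoSidedIdeal.span
          {(1 : MonoidAlgebra k G) + MonoidAlgebra.of k G h -
            MonoidAlgebra.of k G (g⁻¹ * h⁻¹ * g * h)} = ⊤) ∧
    ∀ (k : Type*) [Field k], ¬ KResistant k G := by
  obtain ⟨g, h, hcomm, hne⟩ := exists_good hna
  have hh1 : h ≠ 1 := by rintro rfl; simp at hne
  have hc1 : g⁻¹ * h⁻¹ * g * h ≠ 1 := by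
    intro hc
    apply hne
    have h2 := congrArg (g * ·) hc
    simpa [mul_assoc] using h2
  have hhc : h ≠ g⁻¹ * h⁻¹ * g * h := by
    intro hcEq
    apply hh1
    have h2 : g * h * h⁻¹ = g * (g⁻¹ * h⁻¹ * g * h) * h⁻¹ := by rw [← hcEq]
    have h3 : g = h⁻¹ * g := by
      calc g = g * h * h⁻¹ := by group
        _ = g * (g⁻¹ * h⁻¹ * g * h) * h⁻¹ := h2
        _ = h⁻¹ * g := by group
    have h4 : (1 : G) * g = h⁻¹ * g := by rw [one_mul, ← h3]
    have h5 := mul_right_cancel h4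
    rw [← inv_eq_one, ← h5]
  refine ⟨⟨g, h, hcomm, hne, fun k _ => ⟨supp3 k hh1 hc1 hhc, span_top k hcomm⟩⟩,
    fun k _ hK => ?_⟩
  have := hK _ (by rw [supp3 k hh1 hc1 hhc]; norm_num)
  exact this (span_top k hcomm)
end

section
/- No free group F contains elements f, g, h such that f ≠ 1, f commutes with g, and f lies in the normal subgroup of F generated by the commutator [g,h]. Equivalently: if F is a free group, g, h ∈ F, and f is an element of the normal closure of {[g,h]} in F which commutes with g, then f = 1. -/
/-! Power series on the free monoid over ℤ, with convolution product. -/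

structure Mag (α : Type*) where
  coef : List α → ℤ

namespace Mag

variable {α : Type*}

@[ext] theorem ext {a b : Mag α} (h : ∀ l, a.coef l = b.coef l) : a = b := by
  cases a; cases b; simp only [mk.injEq]; funext l; exact h l

instance : Zero (Mag α) := ⟨⟨fun _ => 0⟩⟩
instance : Add (Mag α) := ⟨fun a b => ⟨fun l => a.coef l + b.coef l⟩⟩
instance : Neg (Mag α) := ⟨fun a => ⟨fun l => -a.coef l⟩⟩
instance : One (Mag α) := ⟨⟨fun l => match l with | [] => 1 | _ => 0⟩⟩
instance : Mul (Mag α) :=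
  ⟨fun a b => ⟨fun l => ∑ k ∈ Finset.range (l.length + 1),
      a.coef (l.take k) * b.coef (l.drop k)⟩⟩

@[simp] theorem coef_zero (l : List α) : (0 : Mag α).coef l = 0 := rfl
@[simp] theorem coef_add (a b : Mag α) (l : List α) :
    (a + b).coef l = a.coef l + b.coef l := rfl
@[simp] theorem coef_neg (a : Mag α) (l : List α) : (-a).coef l = -a.coef l := rfl
@[simp] theorem coef_one_nil : (1 : Mag α).coef [] = 1 := rfl
@[simp] theorem coef_one_cons (x : α) (t : List α) : (1 : Mag α).coef (x :: t) = 0 := rfl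
theorem coef_one_ne_nil {l : List α} (h : l ≠ []) : (1 : Mag α).coef l = 0 := by
  cases l with
  | nil => exact absurd rfl h
  | cons x t => rfl
theorem coef_mul (a b : Mag α) (l : List α) :
    (a * b).coef l = ∑ k ∈ Finset.range (l.length + 1),
      a.coef (l.take k) * b.coef (l.drop k) := rfl

instance : AddCommGroup (Mag α) where
  add_assoc a b c := by ext l; simp [add_assoc]
  zero_add a := by ext l; simp
  add_zero a := by ext l; simp
  add_comm a b := by ext l; simp [add_comm]
  neg_add_cancel a := by ext l; simp
  nsmul := nsmulRec
  zsmul := zsmulRec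

@[simp] theorem coef_sub (a b : Mag α) (l : List α) :
    (a - b).coef l = a.coef l - b.coef l := by
  rw [sub_eq_add_neg, coef_add, coef_neg, sub_eq_add_neg]

theorem one_mul' (a : Mag α) : 1 * a = a := by
  ext l
  rw [coef_mul]
  rw [Finset.sum_eq_single 0]
  · simp
  · intro k hk hk0
    have h1 : l.take k ≠ [] := by
      intro hnil
      have := congrArg List.length hnil
      simp only [List.length_take, List.length_nil] at this
      simp only [Finset.mem_range] at hk
      omega
    rw [coef_one_ne_nil h1, zero_mul]
  · intro h; simp at h

theorem mul_one' (a : Mag α) : a * 1 = a := by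
  ext l
  rw [coef_mul]
  rw [Finset.sum_eq_single l.length]
  · simp
  · intro k hk hk0
    have h1 : l.drop k ≠ [] := by
      intro hnil
      have := congrArg List.length hnil
      simp only [List.length_drop, List.length_nil] at this
      simp only [Finset.mem_range] at hk
      omega
    rw [coef_one_ne_nil h1, mul_zero]
  · intro h; simp at h

theorem mul_assoc' (a b c : Mag α) : a * b * c = a * (b * c) := by
  ext l
  rw [coef_mul, coef_mul]
  have lhs : ∀ j ∈ Finset.range (l.length + 1),
      (a * b).coef (l.take j) * c.coef (l.drop j)
        = ∑ i ∈ Finset.range (j + 1),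
            a.coef (l.take i) * (b.coef ((l.take j).drop i) * c.coef (l.drop j)) := by
    intro j hj
    simp only [Finset.mem_range] at hj
    rw [coef_mul, Finset.sum_mul]
    rw [List.length_take, min_eq_left (by omega)]
    refine Finset.sum_congr rfl fun i hi => ?_
    simp only [Finset.mem_range] at hi
    rw [List.take_take, min_eq_left (by omega), mul_assoc]
  rw [Finset.sum_congr rfl lhs]
  have rhs : ∀ i ∈ Finset.range (l.length + 1),
      a.coef (l.take i) * (b * c).coef (l.drop i)
        = ∑ j ∈ Finset.Ico i (l.length + 1),
            a.coef (l.take i) * (b.coef ((l.take j).drop i) * c.coef (l.drop j)) := by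
    intro i hi
    simp only [Finset.mem_range] at hi
    rw [coef_mul, Finset.mul_sum]
    rw [List.length_drop]
    rw [Finset.sum_Ico_eq_sum_range]
    have : l.length + 1 - i = l.length - i + 1 := by omega
    rw [this]
    refine Finset.sum_congr rfl fun k hk => ?_
    simp only [Finset.mem_range] at hk
    have e1 : (l.take (i + k)).drop i = (l.drop i).take k := by
      rw [List.drop_take]
      congr 1
      omega
    have e2 : l.drop (i + k) = (l.drop i).drop k := by
      rw [List.drop_drop]
    rw [e1, e2]
  rw [Finset.sum_congr rfl rhs]
  have := Finset.sum_Ico_Ico_comm 0 (l.length + 1)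
      (fun i j => a.coef (l.take i) * (b.coef ((l.take j).drop i) * c.coef (l.drop j)))
  simpa [Nat.Ico_zero_eq_range] using this.symm

instance : Ring (Mag α) where
  __ := (inferInstance : AddCommGroup (Mag α))
  mul_assoc := mul_assoc'
  one_mul := one_mul'
  mul_one := mul_one'
  left_distrib a b c := by
    ext l; simp only [coef_mul, coef_add, mul_add, Finset.sum_add_distrib]
  right_distrib a b c := by
    ext l; simp only [coef_mul, coef_add, add_mul, Finset.sum_add_distrib]
  zero_mul a := by ext l; simp [coef_mul]
  mul_zero a := by ext l; simp [coef_mul]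

end Mag
namespace Mag

variable {α : Type*}

/-- `ord j a` : all coefficients of `a` on words of length `< j` vanish. -/
def ord (j : ℕ) (a : Mag α) : Prop := ∀ l : List α, l.length < j → a.coef l = 0

theorem ord.mono {i j : ℕ} (hij : i ≤ j) {a : Mag α} (h : ord j a) : ord i a :=
  fun l hl => h l (lt_of_lt_of_le hl hij)

theorem ord_zero (j : ℕ) : ord j (0 : Mag α) := fun _ _ => rfl

theorem ord.add {j : ℕ} {a b : Mag α} (ha : ord j a) (hb : ord j b) : ord j (a + b) :=
  fun l hl => by rw [coef_add, ha l hl, hb l hl, add_zero]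

theorem ord.neg {j : ℕ} {a : Mag α} (ha : ord j a) : ord j (-a) :=
  fun l hl => by rw [coef_neg, ha l hl, neg_zero]

theorem ord.sub {j : ℕ} {a b : Mag α} (ha : ord j a) (hb : ord j b) : ord j (a - b) :=
  fun l hl => by rw [coef_sub, ha l hl, hb l hl, sub_zero]

theorem ord.mul_left {j : ℕ} (p : Mag α) {a : Mag α} (ha : ord j a) : ord j (p * a) := by
  intro l hl
  rw [coef_mul]
  refine Finset.sum_eq_zero fun k hk => ?_
  rw [ha (l.drop k) (by simp only [List.length_drop]; omega), mul_zero]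

theorem ord.mul_right {j : ℕ} (p : Mag α) {a : Mag α} (ha : ord j a) : ord j (a * p) := by
  intro l hl
  rw [coef_mul]
  refine Finset.sum_eq_zero fun k hk => ?_
  simp only [Finset.mem_range] at hk
  rw [ha (l.take k) (by simp only [List.length_take]; omega), zero_mul]

theorem ord.mul {i j : ℕ} {a b : Mag α} (ha : ord i a) (hb : ord j b) :
    ord (i + j) (a * b) := by
  intro l hl
  rw [coef_mul]
  refine Finset.sum_eq_zero fun k hk => ?_
  simp only [Finset.mem_range] at hk
  rcases lt_or_ge k i with h | h
  · rw [ha (l.take k) (by simp only [List.length_take]; omega), zero_mul]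
  · rw [hb (l.drop k) (by simp only [List.length_drop]; omega), mul_zero]

theorem coef_mul_nil (a b : Mag α) : (a * b).coef [] = a.coef [] * b.coef [] := by
  rw [coef_mul]; simp

theorem natCast_coef_nil (m : ℕ) : (m : Mag α).coef [] = m := by
  induction m with
  | zero => simp
  | succ m ih => push_cast; rw [coef_add, ih]; simp

theorem natCast_coef_ne_nil (m : ℕ) {t : List α} (ht : t ≠ []) : (m : Mag α).coef t = 0 := by
  induction m with
  | zero => simp
  | succ m ih => push_cast; rw [coef_add, ih, coef_one_ne_nil ht, add_zero]

theorem natCast_mul_coef (n : ℕ) (a : Mag α) (l : List α) :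
    ((n : Mag α) * a).coef l = n * a.coef l := by
  rw [coef_mul, Finset.sum_eq_single 0]
  · rw [List.take_zero, List.drop_zero, natCast_coef_nil]
  · intro k hk hk0
    have h1 : l.take k ≠ [] := by
      intro hnil
      have := congrArg List.length hnil
      simp only [List.length_take, List.length_nil] at this
      simp only [Finset.mem_range] at hk
      omega
    rw [natCast_coef_ne_nil n h1, zero_mul]
  · intro h; simp at h

end Mag
namespace Mag

variable {α : Type*}

open Classical in
/-- `1 + X_x`. -/
noncomputable def V (x : α) : Mag α :=
  ⟨fun l => if l = [] ∨ l = [x] then 1 else 0⟩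

open Classical in
/-- `1 - X_x + X_x^2 - ⋯`. -/
noncomputable def W (x : α) : Mag α :=
  ⟨fun l => if ∀ y ∈ l, y = x then (-1) ^ l.length else 0⟩

@[simp] theorem V_coef_nil (x : α) : (V x).coef [] = 1 := by simp [V]

open Classical in
theorem V_coef_single (x y : α) : (V x).coef [y] = if y = x then 1 else 0 := by
  simp only [V]
  by_cases h : y = x <;> simp [h]

theorem V_coef_long {x : α} {l : List α} (h : 2 ≤ l.length) : (V x).coef l = 0 := by
  simp only [V]
  rw [if_neg]
  rintro (rfl | rfl) <;> simp at h

@[simp] theorem W_coef_nil (x : α) : (W x).coef [] = 1 := by simp [W]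

theorem W_coef_cons_self (x : α) (t : List α) : (W x).coef (x :: t) = -(W x).coef t := by
  simp only [W, List.length_cons]
  by_cases h : ∀ y ∈ t, y = x
  · rw [if_pos (by simpa using h), if_pos h, pow_succ]
    ring
  · rw [if_neg (by simpa using h), if_neg h, neg_zero]

theorem W_coef_cons_ne {x y : α} (h : y ≠ x) (t : List α) : (W x).coef (y :: t) = 0 := by
  simp only [W, List.length_cons]
  rw [if_neg]
  intro hc
  exact h (hc y (by simp))

theorem W_coef_concat_self (x : α) (t : List α) :
    (W x).coef (t ++ [x]) = -(W x).coef t := by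
  simp only [W]
  have hl : (t ++ [x]).length = t.length + 1 := by simp
  by_cases h : ∀ y ∈ t, y = x
  · rw [if_pos, if_pos h, hl, pow_succ]
    · ring
    · intro y hy
      rcases List.mem_append.1 hy with hy | hy
      · exact h y hy
      · simpa using hy
  · rw [if_neg, if_neg h, neg_zero]
    intro hc
    exact h fun y hy => hc y (by simp [hy])

theorem W_coef_concat_ne {x y : α} (h : y ≠ x) (t : List α) : (W x).coef (t ++ [y]) = 0 := by
  simp only [W]
  rw [if_neg]
  intro hc
  exact h (hc y (by simp))

/-- Multiplying by `V x` on the left. -/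
theorem V_mul_coef_nil (x : α) (s : Mag α) : (V x * s).coef [] = s.coef [] := by
  rw [coef_mul]; simp

theorem V_mul_coef_cons (x y : α) (s : Mag α) (t : List α) :
    (V x * s).coef (y :: t) = s.coef (y :: t) + (V x).coef [y] * s.coef t := by
  rw [coef_mul]
  have hlen : (y :: t).length + 1 = t.length + 1 + 1 := by simp
  rw [hlen, Finset.sum_range_succ', Finset.sum_range_succ']
  have h0 : ∀ k ∈ Finset.range t.length,
      (V x).coef ((y :: t).take (k + 1 + 1)) * s.coef ((y :: t).drop (k + 1 + 1)) = 0 := by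
    intro k hk
    simp only [Finset.mem_range] at hk
    rw [V_coef_long (by simp only [List.length_take, List.length_cons]; omega), zero_mul]
  rw [Finset.sum_congr rfl h0]
  simp only [Finset.sum_const_zero, zero_add, List.take_succ_cons, List.take_zero,
    List.drop_succ_cons, List.drop_zero, V_coef_nil, one_mul]
  ring

/-- Multiplying by `V x` on the right. -/
theorem mul_V_coef_concat (x y : α) (s : Mag α) (t : List α) :
    (s * V x).coef (t ++ [y]) = s.coef (t ++ [y]) + s.coef t * (V x).coef [y] := by
  rw [coef_mul]
  have hlen : (t ++ [y]).length + 1 = t.length + 1 + 1 := by simp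
  rw [hlen, Finset.sum_range_succ, Finset.sum_range_succ]
  have h0 : ∀ k ∈ Finset.range t.length,
      s.coef ((t ++ [y]).take k) * (V x).coef ((t ++ [y]).drop k) = 0 := by
    intro k hk
    simp only [Finset.mem_range] at hk
    rw [V_coef_long (by simp only [List.length_drop, List.length_append]; simp; omega), mul_zero]
  rw [Finset.sum_congr rfl h0]
  have e1 : (t ++ [y]).take t.length = t := by
    rw [List.take_append_of_le_length (le_refl _), List.take_length]
  have e2 : (t ++ [y]).drop t.length = [y] := by
    rw [List.drop_append_of_le_length (le_refl _), List.drop_length, List.nil_append]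
  have e3 : (t ++ [y]).take (t.length + 1) = t ++ [y] := by
    apply List.take_of_length_le; simp
  have e4 : (t ++ [y]).drop (t.length + 1) = [] := by
    apply List.drop_eq_nil_of_le; simp
  rw [e1, e2, e3, e4]
  simp only [Finset.sum_const_zero, zero_add, V_coef_nil, mul_one]
  ring

theorem V_mul_W (x : α) : V x * W x = 1 := by
  ext l
  cases l with
  | nil => rw [V_mul_coef_nil, W_coef_nil, coef_one_nil]
  | cons y t =>
    rw [V_mul_coef_cons, coef_one_cons, V_coef_single]
    by_cases h : y = x
    · subst h
      rw [if_pos rfl, one_mul, W_coef_cons_self]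
      ring
    · rw [if_neg h, zero_mul, add_zero, W_coef_cons_ne h]

theorem W_mul_V (x : α) : W x * V x = 1 := by
  ext l
  induction l using List.reverseRecOn with
  | nil => rw [coef_mul]; simp [W_coef_nil]
  | append_singleton t y _ =>
    rw [mul_V_coef_concat, V_coef_single, coef_one_ne_nil (by simp)]
    by_cases h : y = x
    · subst h
      rw [if_pos rfl, mul_one, W_coef_concat_self]
      ring
    · rw [if_neg h, mul_zero, add_zero, W_coef_concat_ne h]

/-- The Magnus unit `1 + X_x`. -/
noncomputable def gen (x : α) : (Mag α)ˣ :=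
  ⟨V x, W x, V_mul_W x, W_mul_V x⟩

end Mag
namespace Mag

variable {α : Type*}

/-- `a` is supported on powers of the letter `x`. -/
def xonly (x : α) (a : Mag α) : Prop := ∀ l : List α, a.coef l ≠ 0 → ∀ y ∈ l, y = x

theorem xonly_one (x : α) : xonly x (1 : Mag α) := by
  intro l hl y hy
  cases l with
  | nil => simp at hy
  | cons z t => simp at hl

theorem xonly_V (x : α) : xonly x (V x) := by
  intro l hl y hy
  simp only [V] at hl
  rcases Classical.em (l = [] ∨ l = [x]) with (rfl | rfl) | h
  · simp at hy
  · simpa using hy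
  · rw [if_neg h] at hl; exact absurd rfl hl

theorem xonly_W (x : α) : xonly x (W x) := by
  intro l hl y hy
  simp only [W] at hl
  rcases Classical.em (∀ z ∈ l, z = x) with h | h
  · exact h y hy
  · rw [if_neg h] at hl; exact absurd rfl hl

theorem xonly.mul {x : α} {a b : Mag α} (ha : xonly x a) (hb : xonly x b) :
    xonly x (a * b) := by
  intro l hl y hy
  rw [coef_mul] at hl
  obtain ⟨k, _, hk⟩ := Finset.exists_ne_zero_of_sum_ne_zero hl
  have h1 : a.coef (l.take k) ≠ 0 := fun h => hk (by rw [h, zero_mul])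
  have h2 : b.coef (l.drop k) ≠ 0 := fun h => hk (by rw [h, mul_zero])
  rcases List.mem_append.1 (by rw [List.take_append_drop k l]; exact hy) with hy | hy
  · exact ha _ h1 y hy
  · exact hb _ h2 y hy

theorem xonly.pow {x : α} {u : (Mag α)ˣ} (hu : xonly x u.val) (t : ℕ) :
    xonly x ((u ^ t).val) := by
  induction t with
  | zero => simpa using xonly_one x
  | succ t ih =>
    rw [pow_succ, Units.val_mul]
    exact ih.mul hu

@[simp] theorem gen_val (x : α) : (gen x).val = V x := rfl
@[simp] theorem gen_inv_val (x : α) : ((gen x)⁻¹).val = W x := rfl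

theorem coef_mul_replicate (a b : Mag α) (x : α) (n : ℕ) :
    (a * b).coef (List.replicate n x)
      = ∑ k ∈ Finset.range (n + 1),
          a.coef (List.replicate k x) * b.coef (List.replicate (n - k) x) := by
  rw [coef_mul, List.length_replicate]
  refine Finset.sum_congr rfl fun k hk => ?_
  simp only [Finset.mem_range] at hk
  rw [List.take_replicate, List.drop_replicate, min_eq_left (by omega)]

theorem W_coef_replicate (x : α) (j : ℕ) :
    (W x).coef (List.replicate j x) = (-1) ^ j := by
  simp only [W, List.length_replicate]
  rw [if_pos fun y hy => List.eq_of_mem_replicate hy]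

theorem genpow_coef_gt (x : α) {t j : ℕ} (h : t < j) :
    ((gen x ^ t).val).coef (List.replicate j x) = 0 := by
  induction t generalizing j with
  | zero =>
    rw [pow_zero, Units.val_one, coef_one_ne_nil]
    intro hc
    have := congrArg List.length hc
    simp at this
    omega
  | succ t ih =>
    rw [pow_succ, Units.val_mul, gen_val, coef_mul_replicate]
    refine Finset.sum_eq_zero fun k hk => ?_
    simp only [Finset.mem_range] at hk
    rcases lt_or_ge t k with h1 | h1
    · rw [ih h1, zero_mul]
    · rw [V_coef_long (by simp only [List.length_replicate]; omega), mul_zero]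

theorem genpow_coef_self (x : α) (t : ℕ) :
    ((gen x ^ t).val).coef (List.replicate t x) = 1 := by
  induction t with
  | zero => simp
  | succ t ih =>
    rw [pow_succ, Units.val_mul, gen_val, coef_mul_replicate]
    rw [Finset.sum_eq_single t]
    · rw [ih]
      have : t + 1 - t = 1 := by omega
      rw [this]
      simp [V_coef_single]
    · -- unreachable side condition
      intro k hk hkt
      simp only [Finset.mem_range] at hk
      rcases lt_or_ge t k with h1 | h1
      · rw [genpow_coef_gt x h1, zero_mul]
      · rw [V_coef_long (by simp only [List.length_replicate]; omega), mul_zero]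
    · intro h
      exact absurd (Finset.mem_range.2 (by omega)) h

theorem geninvpow_coef_sign (x : α) (t : ℕ) (j : ℕ) :
    0 < (-1) ^ j * (((gen x)⁻¹ ^ (t + 1)).val).coef (List.replicate j x) := by
  induction t generalizing j with
  | zero =>
    rw [pow_one, gen_inv_val, W_coef_replicate, ← pow_add, ← two_mul, pow_mul]
    norm_num
  | succ t ih =>
    rw [pow_succ, Units.val_mul, gen_inv_val, coef_mul_replicate, Finset.mul_sum]
    refine Finset.sum_pos (fun k hk => ?_) ⟨0, by simp⟩
    simp only [Finset.mem_range] at hk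
    rw [W_coef_replicate]
    have hsplit : ((-1 : ℤ)) ^ j = (-1) ^ (j - k) * (-1) ^ k := by
      rw [← pow_add]
      congr 1
      omega
    rw [hsplit]
    have e : (-1 : ℤ) ^ (j - k) * (-1) ^ k *
        ((((gen x)⁻¹ ^ (t + 1)).val).coef (List.replicate k x) * (-1) ^ (j - k))
        = ((-1 : ℤ) ^ (j - k) * (-1) ^ (j - k)) *
          ((-1) ^ k * (((gen x)⁻¹ ^ (t + 1)).val).coef (List.replicate k x)) := by
      ring
    rw [e, ← pow_add, ← two_mul, pow_mul]
    norm_num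
    exact ih k
end Mag

namespace Mag

variable {α : Type*}

/-- The congruence subgroup of units `u` with `u ≡ 1` mod words of length `≥ j`. -/
def T (j : ℕ) : Subgroup (Mag α)ˣ where
  carrier := {u | ord j (u.val - 1)}
  one_mem' := by simpa using ord_zero j
  mul_mem' := by
    intro u v hu hv
    have key : (u * v).val - 1 = u.val * (v.val - 1) + (u.val - 1) := by
      rw [Units.val_mul]; noncomm_ring
    rw [Set.mem_setOf_eq, key]
    exact (hv.mul_left u.val).add hu
  inv_mem' := by
    intro u hu
    have key : (u⁻¹).val - 1 = -(u⁻¹.val * (u.val - 1)) := by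
      rw [mul_sub, u.inv_mul, mul_one]; noncomm_ring
    rw [Set.mem_setOf_eq, key]
    exact (hu.mul_left _).neg

theorem mem_T_iff {j : ℕ} {u : (Mag α)ˣ} : u ∈ T j ↔ ord j (u.val - 1) := Iff.rfl

instance T_normal (j : ℕ) : (T (α := α) j).Normal := by
  constructor
  intro u hu g
  have key : (g * u * g⁻¹).val - 1 = g.val * (u.val - 1) * (g⁻¹).val := by
    rw [Units.val_mul, Units.val_mul, mul_sub, mul_one, sub_mul, Units.mul_inv]
  rw [mem_T_iff, key]
  exact (hu.mul_left g.val).mul_right (g⁻¹).val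

theorem T_antitone {i j : ℕ} (h : i ≤ j) : (T (α := α) j) ≤ T i :=
  fun _ hu => (mem_T_iff.1 hu).mono h

theorem gen_mem_T1 (x : α) : gen x ∈ T (α := α) 1 := by
  rw [mem_T_iff]
  intro l hl
  have : l = [] := List.length_eq_zero_iff.mp (by omega)
  subst this
  simp

/-- Commutator step: `u ∈ T k`, `v ∈ T 1` imply `[u,v] ∈ T (k+1)`. -/
theorem commutator_mem_T {k : ℕ} {u v : (Mag α)ˣ} (hu : u ∈ T k) (hv : v ∈ T 1) :
    u⁻¹ * v⁻¹ * u * v ∈ T (k + 1) := by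
  set s := u⁻¹ * v⁻¹ * u * v with hs
  have hgrp : (v * u) * s = u * v := by rw [hs]; group
  have h1 : (v * u).val * (s.val - 1) = (u * v).val - (v * u).val := by
    rw [mul_sub, mul_one, ← Units.val_mul, hgrp]
  have h2 : s.val - 1 = ((v * u)⁻¹).val * ((u * v).val - (v * u).val) := by
    rw [← h1, ← mul_assoc, Units.inv_mul, one_mul]
  rw [mem_T_iff, h2]
  apply ord.mul_left
  have expand : (u * v).val - (v * u).val
      = (u.val - 1) * (v.val - 1) - (v.val - 1) * (u.val - 1) := by
    simp only [Units.val_mul]; noncomm_ring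
  rw [expand]
  exact ((mem_T_iff.1 hu).mul (mem_T_iff.1 hv)).sub
    (((mem_T_iff.1 hv).mul (mem_T_iff.1 hu)).mono (by omega))

/-- Isolation for natural powers. -/
theorem isolation_nat {k : ℕ} (hk : 1 ≤ k) {u : (Mag α)ˣ} (hu : u ∈ T k)
    {n : ℕ} (hn : n ≠ 0) (hpow : u ^ n ∈ T (k + 1)) : u ∈ T (k + 1) := by
  set a : Mag α := u.val - 1 with ha
  have hak : ord k a := mem_T_iff.1 hu
  have key : ∀ m : ℕ, ∃ b : Mag α, ord (k + 1) b ∧ (u ^ m).val = 1 + (m : Mag α) * a + b := by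
    intro m
    induction m with
    | zero => exact ⟨0, ord_zero _, by simp⟩
    | succ m ih =>
      obtain ⟨b, hb, heq⟩ := ih
      refine ⟨(m : Mag α) * (a * a) + b * u.val, ?_, ?_⟩
      · exact (ord.mul_left _ ((hak.mul hak).mono (by omega))).add (hb.mul_right _)
      · rw [pow_succ, Units.val_mul, heq]
        have hu1 : u.val = 1 + a := by rw [ha]; noncomm_ring
        rw [hu1]
        push_cast
        noncomm_ring
  obtain ⟨b, hb, heq⟩ := key n
  have hna : ord (k + 1) ((n : Mag α) * a) := by
    have h1 : ord (k + 1) ((u ^ n).val - 1) := mem_T_iff.1 hpow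
    have h2 : (n : Mag α) * a = ((u ^ n).val - 1) - b := by rw [heq]; noncomm_ring
    rw [h2]
    exact h1.sub hb
  rw [mem_T_iff]
  intro l hl
  have hcoef := hna l hl
  rw [natCast_mul_coef] at hcoef
  exact (mul_eq_zero.1 hcoef).resolve_left (Int.natCast_ne_zero.mpr hn)

end Mag

namespace Mag

variable {α : Type*}

/-- The unit associated to a word in letters-with-signs. -/
noncomputable def lit (L : List (α × Bool)) : (Mag α)ˣ :=
  (L.map fun p => cond p.2 (gen p.1) (gen p.1)⁻¹).prod

def letters (L : List (α × Bool)) : List α := L.map Prod.fst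

/-- The no-cancellation condition on words. -/
def Reduced (L : List (α × Bool)) : Prop :=
  List.Chain' (fun p q : α × Bool => p.1 = q.1 → p.2 = q.2) L

theorem getLast?_eq_of_all {x : α} {l : List α} (h : l ≠ []) (hall : ∀ y ∈ l, y = x) :
    l.getLast? = some x := by
  rw [List.getLast?_eq_getLast h]
  exact congrArg some (hall _ (List.getLast_mem h))

theorem lit_nil : lit ([] : List (α × Bool)) = 1 := rfl

theorem dropWhile_head_not {γ : Type*} (p : γ → Bool) :
    ∀ (l : List γ) (q : γ) (tl' : List γ), l.dropWhile p = q :: tl' → ¬ p q := by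
  intro l
  induction l with
  | nil => intro q tl' h; simp at h
  | cons a l ih =>
    intro q tl' h
    by_cases hpa : p a
    · rw [List.dropWhile_cons_of_pos hpa] at h
      exact ih q tl' h
    · rw [List.dropWhile_cons_of_neg hpa] at h
      obtain ⟨rfl, -⟩ := List.cons.injEq .. ▸ h
      · exact hpa


/-- The key coefficient computation for products of reduced words. -/
theorem magnus_key : ∀ (N : ℕ) (L : List (α × Bool)), L.length ≤ N → Reduced L →
    ((lit L).val.coef (letters L) ≠ 0) ∧
    (∀ u : List α, u ≠ [] → (∀ p ∈ L.head?, ∀ z ∈ u.getLast?, z ≠ p.1) →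
      (lit L).val.coef (u ++ letters L) = 0) := by
  intro N
  induction N with
  | zero =>
    intro L hL _
    have : L = [] := List.length_eq_zero_iff.mp (by omega)
    subst this
    constructor
    · simp [lit_nil, letters]
    · intro u hu _
      simp only [letters, List.map_nil, List.append_nil, lit_nil, Units.val_one]
      exact coef_one_ne_nil hu
  | succ N ih =>
    intro L hL hred
    cases hL0 : L with
    | nil =>
      constructor
      · simp [lit_nil, letters]
      · intro u hu _
        simp only [letters, List.map_nil, List.append_nil, lit_nil, Units.val_one]
        exact coef_one_ne_nil hu
    | cons p0 tl =>
      classical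
      obtain ⟨x, b⟩ := p0
      subst hL0
      set P : α × Bool → Bool := fun q => decide (q = (x, b)) with hP
      set run := List.takeWhile P ((x, b) :: tl) with hrun
      set L₂ := List.dropWhile P ((x, b) :: tl) with hL₂
      set t := run.length with ht
      have hsplit : run ++ L₂ = (x, b) :: tl := List.takeWhile_append_dropWhile (p := P) (l := (x, b) :: tl)
      have hrun_all : ∀ q ∈ run, q = (x, b) := by
        intro q hq
        have := List.mem_takeWhile_imp hq
        rwa [hP, decide_eq_true_iff] at this
      have hrun_rep : run = List.replicate t (x, b) := by
        rw [ht]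
        exact List.eq_replicate_length.mpr hrun_all
      have ht1 : 1 ≤ t := by
        rw [ht, hrun, List.takeWhile_cons_of_pos (by simp [hP])]
        simp
      -- head of L₂ has a different letter
      have hhead : ∀ q ∈ L₂.head?, q.1 ≠ x := by
        intro q hq
        cases hL2c : L₂ with
        | nil => rw [hL2c] at hq; simp at hq
        | cons q0 tl₂ =>
          rw [hL2c] at hq
          simp only [List.head?_cons, Option.mem_some_iff] at hq
          subst hq
          have hq0 : ¬(q0 = (x, b)) := by
            have := dropWhile_head_not P ((x, b) :: tl) q0 tl₂ (by rw [← hL₂]; exact hL2c)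
            rw [hP] at this
            simpa using this
          -- use reducedness across the junction
          have hchain : Reduced (run ++ L₂) := by rw [hsplit]; exact hred
          rw [Reduced, List.Chain', List.isChain_append] at hchain
          obtain ⟨-, -, hjun⟩ := hchain
          have hlast : run.getLast? = some (x, b) := by
            apply getLast?_eq_of_all (by rw [hrun_rep]; simp; omega) hrun_all
          have := hjun (x, b) hlast q0 (by rw [hL2c]; simp)
          intro hq1
          exact hq0 (Prod.ext hq1 (this hq1.symm).symm)
      have hredL₂ : Reduced L₂ := by
        have hchain : Reduced (run ++ L₂) := by rw [hsplit]; exact hred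
        rw [Reduced, List.Chain', List.isChain_append] at hchain
        exact hchain.2.1
      have hlenL₂ : L₂.length ≤ N := by
        have hlen2 := congrArg List.length hsplit
        rw [List.length_append, hrun_rep, List.length_replicate] at hlen2
        simp only [List.length_cons] at hlen2
        simp only [List.length_cons] at hL
        omega
      obtain ⟨ihA, ihB⟩ := ih L₂ hlenL₂ hredL₂
      -- the syllable unit
      set A : (Mag α)ˣ := (cond b (gen x) (gen x)⁻¹) ^ t with hA
      have hxA : xonly x A.val := by
        rw [hA]
        cases b
        · exact (xonly_W x).pow t
        · exact (xonly_V x).pow t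
      have hAcoef : A.val.coef (List.replicate t x) ≠ 0 := by
        rw [hA]
        cases b
        · simp only [cond_false]
          obtain ⟨t', ht'⟩ : ∃ t', t = t' + 1 := ⟨t - 1, by omega⟩
          rw [ht']
          have hsign := geninvpow_coef_sign x t' (t' + 1)
          intro h0
          rw [h0, mul_zero] at hsign
          exact lt_irrefl 0 hsign
        · simp only [cond_true]
          rw [genpow_coef_self]
          exact one_ne_zero
      have hlit : lit ((x, b) :: tl) = A * lit L₂ := by
        rw [← hsplit, lit, List.map_append, List.prod_append, hrun_rep]
        rw [List.map_replicate, List.prod_replicate]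
        rfl
      have hletters : letters ((x, b) :: tl) = List.replicate t x ++ letters L₂ := by
        rw [← hsplit, letters, List.map_append, hrun_rep, List.map_replicate]
        rfl
      -- claim: prefixes with nonzero A-coefficient are replicates
      have hpref : ∀ (l : List α) (k : ℕ), A.val.coef (l.take k) ≠ 0 →
          l.take k = List.replicate (l.take k).length x := by
        intro l k hk
        exact List.eq_replicate_length.mpr (hxA _ hk)
      constructor
      · -- nonvanishing at the full letter word
        rw [hlit, hletters, Units.val_mul, coef_mul]
        rw [Finset.sum_eq_single t]
        · have e1 : (List.replicate t x ++ letters L₂).take t = List.replicate t x :=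
            List.take_left' (by simp)
          have e2 : (List.replicate t x ++ letters L₂).drop t = letters L₂ :=
            List.drop_left' (by simp)
          rw [e1, e2]
          exact mul_ne_zero hAcoef ihA
        · intro k hk hkt
          simp only [Finset.mem_range, List.length_append, List.length_replicate] at hk
          by_cases hz : A.val.coef ((List.replicate t x ++ letters L₂).take k) = 0
          · rw [hz, zero_mul]
          · have hrep := hpref _ k hz
            rcases lt_or_ge k t with hklt | hkge
            · -- k < t : drop is replicate (t-k) x ++ letters L₂, IH-vanishing
              have e3 : (List.replicate t x ++ letters L₂).drop k
                  = List.replicate (t - k) x ++ letters L₂ := by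
                rw [List.drop_append_of_le_length (by simp; omega), List.drop_replicate]
              rw [e3, ihB (List.replicate (t - k) x)
                  (by simp; omega)
                  (fun p hp z hz' => by
                    rw [getLast?_eq_of_all (by simp; omega)
                      (fun y hy => List.eq_of_mem_replicate hy)] at hz'
                    simp only [Option.mem_some_iff] at hz'
                    subst hz'
                    exact (hhead p hp).symm), mul_zero]
            · -- k > t (k = t excluded) : the prefix reaches into letters L₂
              have hkgt : t < k := by omega
              -- letters L₂ is nonempty and starts with a non-x letter
              have hL₂ne : letters L₂ ≠ [] := by
                intro hnil
                have hml : (letters L₂).length = 0 := by rw [hnil]; rfl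
                omega
              obtain ⟨y, M, hyM⟩ := List.exists_cons_of_ne_nil hL₂ne
              have hy : y ≠ x := by
                obtain ⟨q, tl₂, hq⟩ := List.exists_cons_of_ne_nil
                  (show L₂ ≠ [] by intro h; rw [h] at hyM; simp [letters] at hyM)
                have : q.1 ≠ x := hhead q (by rw [hq]; simp)
                rw [hq] at hyM
                simp only [letters, List.map_cons, List.cons.injEq] at hyM
                rwa [hyM.1] at this
              -- y occurs in the prefix take k
              have hyin : y ∈ (List.replicate t x ++ letters L₂).take k := by
                rw [List.take_append]
                apply List.mem_append.2
                right
                rw [hyM]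
                rw [List.take_cons (by simp; omega)]
                exact List.mem_cons_self
              have := hxA _ hz y hyin
              exact absurd this hy
        · intro hnot
          exfalso
          apply hnot
          simp only [Finset.mem_range, List.length_append, List.length_replicate]
          omega
      · -- vanishing with junk prefix
        intro u hu hulast
        have hulastx : ∀ z ∈ u.getLast?, z ≠ x := by
          intro z hz
          exact hulast (x, b) (by simp) z hz
        rw [hlit, hletters, Units.val_mul, coef_mul]
        apply Finset.sum_eq_zero
        intro k hk
        simp only [Finset.mem_range, List.length_append] at hk
        by_cases hz : A.val.coef ((u ++ (List.replicate t x ++ letters L₂)).take k) = 0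
        · rw [hz, zero_mul]
        · set l := u ++ (List.replicate t x ++ letters L₂) with hldef
          have hrep := hpref l k hz
          rcases lt_or_ge k u.length with hklt | hkge
          · -- the drop still contains the whole replicate block: IH-vanishing
            have e3 : l.drop k = (u.drop k ++ List.replicate t x) ++ letters L₂ := by
              rw [hldef, List.drop_append_of_le_length (by omega), List.append_assoc]
            rw [e3, ihB (u.drop k ++ List.replicate t x)
                (by
                  intro hnil
                  have := congrArg List.length hnil
                  simp only [List.length_append, List.length_drop,
                    List.length_replicate, List.length_nil] at this
                  omega)
                (fun p hp z hz' => by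
                  rw [List.getLast?_append_of_ne_nil _ (by simp; omega)] at hz'
                  rw [getLast?_eq_of_all (by simp; omega)
                    (fun y hy => List.eq_of_mem_replicate hy)] at hz'
                  simp only [Option.mem_some_iff] at hz'
                  subst hz'
                  exact (hhead p hp).symm), mul_zero]
          · -- the prefix swallows `u`, so `u` is all-x: contradiction
            exfalso
            have h1 : l.take u.length = u := by
              rw [hldef, List.take_append_of_le_length (le_refl _), List.take_length]
            have h2 : (l.take k).take u.length = u := by
              rw [List.take_take, min_eq_left hkge, h1]
            rw [hrep, List.take_replicate] at h2
            have h3 : min u.length (l.take k).length = u.length := by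
              apply min_eq_left
              rw [List.length_take]
              rw [hldef]
              simp only [List.length_append, List.length_replicate]
              omega
            rw [h3] at h2
            have hall : ∀ y ∈ u, y = x := by
              intro y hy
              rw [← h2] at hy
              exact List.eq_of_mem_replicate hy
            exact hulastx x (getLast?_eq_of_all hu hall) rfl

/-- Every `toWord` is reduced. -/
theorem chain'_of_nobad : ∀ (L : List (α × Bool)),
    (∀ (L₁ L₂ : List (α × Bool)) (x : α) (c : Bool), L ≠ L₁ ++ (x, c) :: (x, !c) :: L₂) →
    Reduced L := by
  intro L
  induction L with
  | nil => intro _; exact List.isChain_nil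
  | cons p tl ih =>
    cases tl with
    | nil => intro _; exact List.isChain_singleton p
    | cons q tl₂ =>
      intro h
      rw [Reduced, List.Chain', List.isChain_cons_cons]
      constructor
      · intro h1
        by_contra h2
        have hq : q = (p.1, !p.2) := by
          have : q.2 = !p.2 := by
            cases hp2 : p.2 <;> cases hq2 : q.2 <;> simp_all
          exact Prod.ext h1.symm this
        exact h [] tl₂ p.1 p.2 (by rw [List.nil_append, ← hq])
      · exact ih fun L₁ L₂ x c hc =>
          h (p :: L₁) L₂ x c (by rw [List.cons_append]; exact congrArg (List.cons p) hc)

theorem reduced_toWord [DecidableEq α] (w : FreeGroup α) : Reduced (FreeGroup.toWord w) := by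
  apply chain'_of_nobad
  intro L₁ L₂ x c heq
  have hr := FreeGroup.reduce_toWord w
  rw [heq] at hr
  exact FreeGroup.reduce.not hr

/-- The Magnus homomorphism. -/
noncomputable def mu : FreeGroup α →* (Mag α)ˣ := FreeGroup.lift gen

theorem mu_eq_one_iff {w : FreeGroup α} (h : mu w = 1) : w = 1 := by
  classical
  by_contra hw
  have hL : w.toWord ≠ [] := by
    intro hnil
    apply hw
    apply FreeGroup.toWord_injective
    rw [hnil, FreeGroup.toWord_one]
  have hlitw : lit w.toWord = mu w := by
    rw [mu]
    conv_rhs => rw [← FreeGroup.mk_toWord (x := w)]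
    rw [FreeGroup.lift_mk]
    rfl
  have hne := (magnus_key w.toWord.length w.toWord le_rfl (reduced_toWord w)).1
  rw [hlitw, h] at hne
  apply hne
  rw [Units.val_one]
  apply coef_one_ne_nil
  intro hnil
  apply hL
  have := congrArg List.length hnil
  simp only [letters, List.length_map, List.length_nil] at this
  exact List.length_eq_zero_iff.mp this

end Mag


section CommonPower

variable {α : Type*}

theorem freeGroup_comm_subsingleton {β : Type*}
    (hcomm : ∀ a b : FreeGroup β, a * b = b * a) : Subsingleton β := by
  classical
  constructor
  intro a b
  by_contra hab
  set φ : FreeGroup β →* Equiv.Perm (Fin 3) :=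
    FreeGroup.lift fun c => if c = a then Equiv.swap 0 1 else
      if c = b then Equiv.swap 1 2 else 1 with hφ
  have h1 : φ (FreeGroup.of a) = Equiv.swap 0 1 := by
    rw [hφ, FreeGroup.lift_apply_of, if_pos rfl]
  have h2 : φ (FreeGroup.of b) = Equiv.swap 1 2 := by
    rw [hφ, FreeGroup.lift_apply_of, if_neg (Ne.symm hab), if_pos rfl]
  have := hcomm (FreeGroup.of a) (FreeGroup.of b)
  have hmap := congrArg φ this
  rw [map_mul, map_mul, h1, h2] at hmap
  have : Equiv.swap (0 : Fin 3) 1 * Equiv.swap 1 2 ≠ Equiv.swap 1 2 * Equiv.swap 0 1 := by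
    decide
  exact this hmap

theorem freeGroup_subsingleton_cyclic {β : Type*} [Subsingleton β] (v : FreeGroup β) :
    (∀ x₀ : β, ∃ m : ℤ, v = FreeGroup.of x₀ ^ m) ∧ (IsEmpty β → v = 1) := by
  induction v using FreeGroup.induction_on with
  | C1 => exact ⟨fun x₀ => ⟨0, by simp⟩, fun _ => rfl⟩
  | of x =>
    refine ⟨fun x₀ => ⟨1, by rw [Subsingleton.elim x x₀, zpow_one]⟩, fun he => (he.false x).elim⟩
  | inv_of x ih =>
    obtain ⟨ih1, ih2⟩ := ih
    refine ⟨fun x₀ => ?_, fun he => by rw [ih2 he]; simp⟩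
    obtain ⟨m, hm⟩ := ih1 x₀
    exact ⟨-m, by rw [zpow_neg, ← hm]⟩
  | mul v w ihv ihw =>
    obtain ⟨ihv1, ihv2⟩ := ihv
    obtain ⟨ihw1, ihw2⟩ := ihw
    refine ⟨fun x₀ => ?_, fun he => by rw [ihv2 he, ihw2 he, one_mul]⟩
    obtain ⟨m, hm⟩ := ihv1 x₀
    obtain ⟨n, hn⟩ := ihw1 x₀
    exact ⟨m + n, by rw [hm, hn, zpow_add]⟩

/-- Commuting elements of a free group are powers of a common element
(via Nielsen–Schreier). -/
theorem commute_common_power (f g : FreeGroup α) (hfg : f * g = g * f) :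
    ∃ (z : FreeGroup α) (m n : ℤ), f = z ^ m ∧ g = z ^ n := by
  set H : Subgroup (FreeGroup α) := Subgroup.closure {f, g} with hH
  have hfH : f ∈ H := Subgroup.subset_closure (by simp)
  have hgH : g ∈ H := Subgroup.subset_closure (by simp)
  -- H is commutative
  have hcommH : ∀ a ∈ H, ∀ b ∈ H, a * b = b * a := by
    intro a ha b hb
    refine Subgroup.closure_induction₂
      (p := fun x y _ _ => x * y = y * x) ?_ ?_ ?_ ?_ ?_ ?_ ?_ ha hb
    · rintro x y (rfl | rfl) (rfl | rfl)
      · rfl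
      · exact hfg
      · exact hfg.symm
      · rfl
    · intro x _; rw [one_mul, mul_one]
    · intro x _; rw [one_mul, mul_one]
    · intro x y z _ _ _ h1 h2
      rw [mul_assoc, h2, ← mul_assoc, h1, mul_assoc]
    · intro y z x _ _ _ h1 h2
      rw [← mul_assoc, h1, mul_assoc, h2, ← mul_assoc]
    · intro x y _ _ hxy
      have := congrArg (fun w => x⁻¹ * w * x⁻¹) hxy
      simp only [mul_assoc] at this
      simp only [inv_mul_cancel_left, mul_inv_cancel_left] at this
      calc x⁻¹ * y = x⁻¹ * y * x * x⁻¹ := by group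
        _ = y * x⁻¹ := by
            rw [show x⁻¹ * y * x = y from by
              rw [mul_assoc, ← hxy, ← mul_assoc, inv_mul_cancel, one_mul]]
    · intro x y _ _ hxy
      calc x * y⁻¹ = y⁻¹ * (y * x * y⁻¹) := by group
        _ = y⁻¹ * x := by rw [← hxy, mul_assoc, mul_inv_cancel, mul_one]
  -- H is a free group by Nielsen–Schreier; being commutative, it is cyclic
  have hcommH' : ∀ a b : H, a * b = b * a := by
    intro a b
    ext
    exact hcommH a a.2 b b.2
  set β := IsFreeGroup.Generators H with hβ
  set e : FreeGroup β ≃* H := IsFreeGroup.mulEquiv H with he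
  have hcommβ : ∀ a b : FreeGroup β, a * b = b * a := by
    intro a b
    apply e.injective
    rw [map_mul, map_mul, hcommH']
  haveI : Subsingleton β := freeGroup_comm_subsingleton hcommβ
  rcases isEmpty_or_nonempty β with hE | hN
  · -- H is trivial
    have htriv : ∀ a : H, a = 1 := by
      intro a
      have := (freeGroup_subsingleton_cyclic (e.symm a)).2 hE
      have h2 := congrArg e this
      rw [MulEquiv.apply_symm_apply, map_one] at h2
      exact h2
    refine ⟨1, 0, 0, ?_, ?_⟩
    · have := htriv ⟨f, hfH⟩
      simpa [Subtype.ext_iff] using this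
    · have := htriv ⟨g, hgH⟩
      simpa [Subtype.ext_iff] using this
  · obtain ⟨x₀⟩ := hN
    set zH : H := e (FreeGroup.of x₀) with hzH
    have hcyc : ∀ a : H, ∃ m : ℤ, a = zH ^ m := by
      intro a
      obtain ⟨m, hm⟩ := (freeGroup_subsingleton_cyclic (e.symm a)).1 x₀
      refine ⟨m, ?_⟩
      have := congrArg e hm
      rw [MulEquiv.apply_symm_apply, map_zpow] at this
      rw [this, hzH]
    obtain ⟨m, hm⟩ := hcyc ⟨f, hfH⟩
    obtain ⟨n, hn⟩ := hcyc ⟨g, hgH⟩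
    refine ⟨(zH : FreeGroup α), m, n, ?_, ?_⟩
    · have := congrArg (Subtype.val) hm
      simpa using this
    · have := congrArg (Subtype.val) hn
      simpa using this

end CommonPower

/-- No free group contains elements `f, g, h` with `f ≠ 1`, `f` commuting with `g`, and `f`
in the normal subgroup generated by `[g,h] = g⁻¹h⁻¹gh`: if `f` lies in the normal closure of
`{[g,h]}` and commutes with `g`, then `f = 1`. -/
theorem freeGroup_no_trinomial_data {α : Type*} (g h f : FreeGroup α)
    (hfN : f ∈ Subgroup.normalClosure ({g⁻¹ * h⁻¹ * g * h} : Set (FreeGroup α)))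
    (hfg : f * g = g * f) : f = 1 := by
  obtain ⟨z, m, n, hf, hg⟩ := commute_common_power f g hfg
  rcases eq_or_ne m 0 with rfl | hm
  · rw [hf, zpow_zero]
  -- the Magnus filtration argument
  have hzT : ∀ k : ℕ, Mag.mu z ∈ Mag.T (k + 1) := by
    intro k
    induction k with
    | zero =>
      -- every element of the image of `mu` lies in `T 1`
      clear hf hg hfN hm
      induction z using FreeGroup.induction_on with
      | C1 => rw [map_one]; exact Subgroup.one_mem _
      | of x =>
        show Mag.mu (FreeGroup.of x) ∈ Mag.T 1
        rw [show Mag.mu (FreeGroup.of x) = Mag.gen x from FreeGroup.lift_apply_of]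
        exact Mag.gen_mem_T1 x
      | inv_of x ihx => rw [map_inv]; exact Subgroup.inv_mem _ ihx
      | mul a b iha ihb => rw [map_mul]; exact Subgroup.mul_mem _ iha ihb
    | succ k ihk =>
      -- `mu g ∈ T (k+1)`, hence the commutator is in `T (k+2)`, hence `N ≤ 𝒟 (k+2)`
      have hmuh : Mag.mu h ∈ Mag.T 1 := by
        clear hf hg hfN hm ihk
        induction h using FreeGroup.induction_on with
        | C1 => rw [map_one]; exact Subgroup.one_mem _
        | of x =>
          show Mag.mu (FreeGroup.of x) ∈ Mag.T 1
          rw [show Mag.mu (FreeGroup.of x) = Mag.gen x from FreeGroup.lift_apply_of]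
          exact Mag.gen_mem_T1 x
        | inv_of x ihx => rw [map_inv]; exact Subgroup.inv_mem _ ihx
        | mul a b iha ihb => rw [map_mul]; exact Subgroup.mul_mem _ iha ihb
      have hmug : Mag.mu g ∈ Mag.T (k + 1) := by
        rw [hg, map_zpow]
        exact Subgroup.zpow_mem _ ihk n
      have hc : Mag.mu (g⁻¹ * h⁻¹ * g * h) ∈ Mag.T (k + 2) := by
        rw [map_mul, map_mul, map_mul, map_inv, map_inv]
        exact Mag.commutator_mem_T hmug hmuh
      have hNle : Subgroup.normalClosure ({g⁻¹ * h⁻¹ * g * h} : Set (FreeGroup α))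
          ≤ (Mag.T (k + 2)).comap Mag.mu := by
        haveI : ((Mag.T (α := α) (k + 2)).comap Mag.mu).Normal :=
          (Mag.T_normal (k + 2)).comap Mag.mu
        apply Subgroup.normalClosure_le_normal
        intro w hw
        rw [Set.mem_singleton_iff] at hw
        subst hw
        exact hc
      have hfT : Mag.mu f ∈ Mag.T (k + 2) := hNle hfN
      rw [hf, map_zpow] at hfT
      -- isolation
      rcases lt_trichotomy m 0 with hmneg | hmz | hmpos
      · have hstep : (Mag.mu z)⁻¹ ∈ Mag.T (k + 2) := by
          apply Mag.isolation_nat (by omega) (Subgroup.inv_mem _ ihk)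
            (n := (-m).toNat) (by omega)
          have heq : (Mag.mu z)⁻¹ ^ (-m).toNat = Mag.mu z ^ m := by
            rw [inv_pow, ← zpow_natCast, Int.toNat_of_nonneg (by omega), zpow_neg, inv_inv]
          rw [heq]
          exact hfT
        have := Subgroup.inv_mem _ hstep
        rwa [inv_inv] at this
      · exact absurd hmz hm
      · apply Mag.isolation_nat (by omega) ihk (n := m.toNat) (by omega)
        rwa [← zpow_natCast, Int.toNat_of_nonneg (by omega)]
  -- conclude `mu z = 1`, hence `z = 1`, hence `f = 1`
  have hz1 : Mag.mu z = 1 := by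
    apply Units.ext
    rw [Units.val_one]
    have hcoef : ∀ l : List α, ((Mag.mu z).val - 1).coef l = 0 := by
      intro l
      exact Mag.mem_T_iff.1 (hzT (l.length + 1)) l (by omega)
    ext l
    have := hcoef l
    rw [Mag.coef_sub] at this
    omega
  rw [hf, Mag.mu_eq_one_iff hz1, one_zpow]
end
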